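/- arXiv:2505.07051 — 8 statements merged into one kernel-verified Lean document; each statement's English description precedes it below -/
import Mathlib

section
/- For a prime p and nonnegative integer a, B(ℓ, p^a) = p^{(ℓ-1)a} · (p^{-a-1}; p^{-1})_{ℓ-1} / (p^{-1}; p^{-1})_{ℓ-1}, where (z;q)_r = (1-z)(1-qz)···(1-q^{r-1}z) is the q-Pochhammer symbol. -/
/-- B(ℓ,n) as a sum over ℓ-tuples of positive integers with product n. -/
def Btuple (ℓ n : ℕ) : ℕ :=
  ∑ f ∈ (Fintype.piFinset fun _ : Fin ℓ => Finset.range (n+1)) |>.filter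
      (fun f => ∏ i, f i = n),
    ∏ i : Fin ℓ, (f i) ^ (ℓ - 1 - (i : ℕ))

/-- The q-Pochhammer symbol (z;q)_r = ∏_{j=0}^{r-1} (1 - q^j z). -/
def qPoch (z q : ℝ) (r : ℕ) : ℝ := ∏ j ∈ Finset.range r, (1 - q ^ j * z)

/-!
Writing each factor as `f i = p ^ e i` turns `B(ℓ, p^a)` into the sum of `p ^ ∑ i, (ℓ - 1 - i) * e i`
over the compositions `e` of `a` into `ℓ` parts, i.e. the Gaussian binomial `[a + ℓ - 1, ℓ - 1]_p`.
Splitting off `e 0` gives the `q`-Pascal recurrence, and a double induction on `ℓ` and `a` yields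
`[a + r, r]_q = ∏_{j < r} (q^(a+j+1) - 1) / (q^(j+1) - 1)`. Multiplying the `j`-th factor
`q^a (1 - q^-(a+j+1)) / (1 - q^-(j+1))` of the `q`-Pochhammer quotient by `q^(j+1) / q^(j+1)`
gives the same product.
-/

open Finset

theorem Finset.Nat.sum_antidiagonalTuple_succ {M : Type*} [AddCommMonoid M] (k n : ℕ)
    (g : (Fin (k + 1) → ℕ) → M) :
    ∑ e ∈ Nat.antidiagonalTuple (k + 1) n, g e =
      ∑ im ∈ antidiagonal n, ∑ x ∈ Nat.antidiagonalTuple k im.2, g (Fin.cons im.1 x) := by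
  rw [sum_sigma']
  refine sum_nbij' (fun e => ⟨(e 0, ∑ i, Fin.tail e i), Fin.tail e⟩)
    (fun y => Fin.cons y.1.1 y.2) (fun e he => ?_) (fun y hy => ?_)
    (fun e _ => Fin.cons_self_tail e) (fun y hy => ?_) (fun e _ => by rw [Fin.cons_self_tail])
  · rw [Nat.mem_antidiagonalTuple, Fin.sum_univ_succ] at he
    simpa [Nat.mem_antidiagonalTuple, Fin.tail] using he
  · simp only [mem_sigma, HasAntidiagonal.mem_antidiagonal, Nat.mem_antidiagonalTuple] at hy
    simp [Nat.mem_antidiagonalTuple, Fin.sum_univ_succ, hy.1, hy.2]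
  · simp only [mem_sigma, Nat.mem_antidiagonalTuple] at hy
    simp [hy.2]

section TupleWeightSum

variable {R : Type*} [CommSemiring R]

/-- The Gaussian binomial coefficient `[a + ℓ - 1, ℓ - 1]_q`. -/
def tupleWeightSum (q : R) (ℓ a : ℕ) : R :=
  ∑ e ∈ Nat.antidiagonalTuple ℓ a, ∏ i : Fin ℓ, q ^ ((ℓ - 1 - i) * e i)

@[simp, norm_cast]
theorem Nat.cast_tupleWeightSum (q ℓ a : ℕ) :
    ((tupleWeightSum q ℓ a : ℕ) : R) = tupleWeightSum (q : R) ℓ a := by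
  simp [tupleWeightSum]

theorem tupleWeightSum_zero_right (q : R) (ℓ : ℕ) : tupleWeightSum q ℓ 0 = 1 := by
  simp [tupleWeightSum, Nat.antidiagonalTuple_zero_right]

theorem tupleWeightSum_one_left (q : R) (a : ℕ) : tupleWeightSum q 1 a = 1 := by
  simp [tupleWeightSum]

theorem tupleWeightSum_succ_left (q : R) (ℓ n : ℕ) :
    tupleWeightSum q (ℓ + 1) n =
      ∑ im ∈ antidiagonal n, q ^ (ℓ * im.1) * tupleWeightSum q ℓ im.2 := by
  rw [tupleWeightSum, Nat.sum_antidiagonalTuple_succ]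
  refine sum_congr rfl fun im _ => ?_
  rw [tupleWeightSum, mul_sum]
  refine sum_congr rfl fun x _ => ?_
  rw [Fin.prod_univ_succ]
  simp only [Fin.cons_zero, Fin.cons_succ, Fin.val_zero, Fin.val_succ]
  congr 2
  funext i
  congr 2
  omega

theorem tupleWeightSum_succ_succ (q : R) (ℓ n : ℕ) :
    tupleWeightSum q (ℓ + 1) (n + 1) =
      tupleWeightSum q ℓ (n + 1) + q ^ ℓ * tupleWeightSum q (ℓ + 1) n := by
  rw [tupleWeightSum_succ_left, Nat.antidiagonal_succ, sum_cons, tupleWeightSum_succ_left, mul_sum,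
    sum_map]
  simp only [Function.Embedding.prodMap, Function.Embedding.coeFn_mk, Prod.map_fst, Prod.map_snd,
    Function.Embedding.refl_apply, Nat.succ_eq_add_one, mul_zero, pow_zero, one_mul, mul_add_one,
    pow_add, mul_assoc, mul_left_comm (q ^ ℓ)]

end TupleWeightSum

theorem tupleWeightSum_mul_prod {R : Type*} [CommRing R] (q : R) (ℓ a : ℕ) :
    tupleWeightSum q (ℓ + 1) a * ∏ j ∈ range ℓ, (q ^ (j + 1) - 1) =
      ∏ j ∈ range ℓ, (q ^ (a + j + 1) - 1) := by
  induction ℓ generalizing a with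
  | zero => simp [tupleWeightSum_one_left]
  | succ ℓ ih =>
    induction a with
    | zero => simp [tupleWeightSum_zero_right]
    | succ a iha =>
      have shift : ∏ j ∈ range (ℓ + 1), (q ^ (a + j + 1) - 1) =
          (q ^ (a + 1) - 1) * ∏ j ∈ range ℓ, (q ^ (a + 1 + j + 1) - 1) := by
        rw [prod_range_succ', mul_comm]
        simp only [add_assoc, add_comm 1]
      rw [shift, prod_range_succ] at iha
      rw [tupleWeightSum_succ_succ, prod_range_succ (fun j => q ^ (j + 1) - 1),
        prod_range_succ (fun j => q ^ (a + 1 + j + 1) - 1)]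
      linear_combination (q ^ (ℓ + 1) - 1) * ih (a + 1) + q ^ (ℓ + 1) * iha

theorem tupleWeightSum_eq_prod_div {K : Type*} [Field K] {q : K} (hq : ∀ j : ℕ, q ^ (j + 1) ≠ 1)
    (r a : ℕ) :
    tupleWeightSum q (r + 1) a = ∏ j ∈ range r, (q ^ (a + j + 1) - 1) / (q ^ (j + 1) - 1) := by
  rw [prod_div_distrib, eq_div_iff (prod_ne_zero_iff.2 fun j _ => sub_ne_zero.2 (hq j)),
    tupleWeightSum_mul_prod]

theorem Btuple_prime_pow {p : ℕ} (hp : p.Prime) (ℓ a : ℕ) :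
    Btuple ℓ (p ^ a) = tupleWeightSum p ℓ a := by
  have pow_log {f : Fin ℓ → ℕ} (hf : ∏ i, f i = p ^ a) (i : Fin ℓ) :
      p ^ Nat.log p (f i) = f i := by
    obtain ⟨c, -, hc⟩ := (Nat.dvd_prime_pow hp).1 (hf ▸ dvd_prod_of_mem f (mem_univ i))
    rw [hc, Nat.log_pow hp.one_lt]
  refine sum_nbij' (fun f i => Nat.log p (f i)) (fun e i => p ^ e i) (fun f hf => ?_)
    (fun e he => ?_) (fun f hf => funext (pow_log (mem_filter.1 hf).2))
    (fun e _ => funext fun i => Nat.log_pow hp.one_lt _) (fun f hf => ?_)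
  · rw [mem_filter] at hf
    rw [Nat.mem_antidiagonalTuple]
    apply Nat.pow_right_injective hp.two_le
    simp only [← prod_pow_eq_pow_sum, pow_log hf.2]
    exact hf.2
  · rw [Nat.mem_antidiagonalTuple] at he
    simp only [mem_filter, Fintype.mem_piFinset, mem_range, Nat.lt_succ_iff,
      prod_pow_eq_pow_sum, he, and_true]
    exact fun i => Nat.pow_le_pow_right hp.pos
      (he ▸ single_le_sum (fun i _ => Nat.zero_le _) (mem_univ i))
  · exact prod_congr rfl fun i _ => by rw [mul_comm, pow_mul, pow_log (mem_filter.1 hf).2]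

theorem pow_mul_qPoch_div_qPoch {q : ℝ} (hq : q ≠ 0) (r a : ℕ) :
    q ^ (r * a) * qPoch (q⁻¹ ^ (a + 1)) q⁻¹ r / qPoch q⁻¹ q⁻¹ r =
      ∏ j ∈ range r, (q ^ (a + j + 1) - 1) / (q ^ (j + 1) - 1) := by
  rw [qPoch, qPoch, mul_comm r, pow_mul, pow_eq_prod_const (q ^ a) r, ← prod_mul_distrib,
    ← prod_div_distrib]
  refine prod_congr rfl fun j _ => ?_
  rw [← pow_add, ← pow_succ, inv_pow, inv_pow, ← mul_div_mul_left _ _ (pow_ne_zero (j + 1) hq)]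
  congr 1
  · field_simp
    ring
  · field_simp

/-- B(ℓ, p^a) = p^{(ℓ-1)a} (p^{-a-1};p^{-1})_{ℓ-1} / (p^{-1};p^{-1})_{ℓ-1}. -/
theorem stmt_3 (ℓ : ℕ) (hℓ : 2 ≤ ℓ) (p : ℕ) (hp : p.Prime) (a : ℕ) :
    (Btuple ℓ (p ^ a) : ℝ) =
      (p : ℝ) ^ ((ℓ - 1) * a) *
        qPoch ((1 / (p : ℝ)) ^ (a + 1)) (1 / (p : ℝ)) (ℓ - 1) /
        qPoch (1 / (p : ℝ)) (1 / (p : ℝ)) (ℓ - 1) := by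
  obtain ⟨r, rfl⟩ : ∃ r, ℓ = r + 1 := ⟨ℓ - 1, by omega⟩
  have hp1 : (1 : ℝ) < p := by exact_mod_cast hp.one_lt
  rw [Btuple_prime_pow hp, Nat.cast_tupleWeightSum,
    tupleWeightSum_eq_prod_div fun j => (one_lt_pow₀ hp1 j.succ_ne_zero).ne', Nat.add_sub_cancel,
    one_div, pow_mul_qPoch_div_qPoch (by positivity)]
end

section
/- For ℓ ≥ 2, a real number q with |q| < 1, and any z, the identity z(1-q) Σ_{k=0}^{∞} q^k (q^{k+1} z; q)_{ℓ-1} = (1-q)(1 - (z;q)_ℓ)/(1 - q^ℓ) holds. -/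
open Filter Topology

lemma qPoch_succ (w q : ℝ) (m : ℕ) :
    qPoch w q (m + 1) = qPoch w q m * (1 - q ^ m * w) :=
  Finset.prod_range_succ _ _

lemma qPoch_succ' (w q : ℝ) (m : ℕ) :
    qPoch w q (m + 1) = qPoch (q * w) q m * (1 - w) := by
  rw [qPoch, Finset.prod_range_succ']
  simp only [qPoch, pow_succ, pow_zero, one_mul, mul_assoc]

lemma qPoch_mul_succ_sub_qPoch_succ (w q : ℝ) (m : ℕ) :
    qPoch (q * w) q (m + 1) - qPoch w q (m + 1) = w * (1 - q ^ (m + 1)) * qPoch (q * w) q m := by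
  rw [qPoch_succ, qPoch_succ']
  ring

lemma abs_qPoch_le {q : ℝ} (hq : |q| ≤ 1) (w : ℝ) (m : ℕ) : |qPoch w q m| ≤ (1 + |w|) ^ m := by
  have hfactor : ∀ j, |1 - q ^ j * w| ≤ 1 + |w| := fun j => by
    calc |1 - q ^ j * w| ≤ 1 + |q| ^ j * |w| := by
          simpa [abs_mul, abs_pow] using abs_sub (1 : ℝ) (q ^ j * w)
      _ ≤ 1 + |w| := by
          gcongr
          exact mul_le_of_le_one_left (abs_nonneg w) (pow_le_one₀ (abs_nonneg q) hq)
  calc |qPoch w q m| = ∏ j ∈ Finset.range m, |1 - q ^ j * w| := Finset.abs_prod _ _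
    _ ≤ ∏ _j ∈ Finset.range m, (1 + |w|) :=
        Finset.prod_le_prod (fun _ _ => abs_nonneg _) fun j _ => hfactor j
    _ = (1 + |w|) ^ m := by simp

lemma continuous_qPoch (q : ℝ) (m : ℕ) : Continuous fun w => qPoch w q m :=
  continuous_finsetProd _ fun _ _ => by fun_prop

lemma tendsto_qPoch_pow_mul {q : ℝ} (hq : |q| < 1) (z : ℝ) (m : ℕ) :
    Tendsto (fun n : ℕ => qPoch (q ^ n * z) q m) atTop (𝓝 1) := by
  have hpow : Tendsto (fun n : ℕ => q ^ n * z) atTop (𝓝 0) := by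
    simpa using (tendsto_pow_atTop_nhds_zero_of_abs_lt_one hq).mul_const z
  simpa [qPoch, Function.comp_def] using ((continuous_qPoch q m).tendsto 0).comp hpow

lemma summable_pow_mul_qPoch {q : ℝ} (hq : |q| < 1) (z : ℝ) (m : ℕ) :
    Summable fun k : ℕ => q ^ k * qPoch (q ^ (k + 1) * z) q m := by
  refine .of_norm_bounded ((summable_geometric_of_lt_one (abs_nonneg q) hq).mul_left
    ((1 + |z|) ^ m)) fun k => ?_
  have hw : |q ^ (k + 1) * z| ≤ |z| := by
    rw [abs_mul, abs_pow]
    exact mul_le_of_le_one_left (abs_nonneg z) (pow_le_one₀ (abs_nonneg q) hq.le)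
  rw [Real.norm_eq_abs, abs_mul, abs_pow, mul_comm]
  gcongr
  exact (abs_qPoch_le hq.le _ m).trans (by gcongr)

lemma hasSum_sub_of_tendsto {f : ℕ → ℝ} {L : ℝ} (hf : Tendsto f atTop (𝓝 L))
    (hs : Summable fun k => f (k + 1) - f k) : HasSum (fun k => f (k + 1) - f k) (L - f 0) := by
  rw [hs.hasSum_iff_tendsto_nat]
  simpa only [Finset.sum_range_sub] using hf.sub_const (f 0)

theorem hasSum_mul_pow_mul_qPoch {q : ℝ} (hq : |q| < 1) (z : ℝ) (m : ℕ) :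
    HasSum (fun k : ℕ => z * (1 - q ^ (m + 1)) * (q ^ k * qPoch (q ^ (k + 1) * z) q m))
      (1 - qPoch z q (m + 1)) := by
  have htel : ∀ k : ℕ, z * (1 - q ^ (m + 1)) * (q ^ k * qPoch (q ^ (k + 1) * z) q m) =
      qPoch (q ^ (k + 1) * z) q (m + 1) - qPoch (q ^ k * z) q (m + 1) := fun k => by
    rw [pow_succ' q k, mul_assoc q, qPoch_mul_succ_sub_qPoch_succ]
    ring
  simp_rw [htel]
  simpa using hasSum_sub_of_tendsto (tendsto_qPoch_pow_mul hq z (m + 1))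
    (by simpa only [← htel] using (summable_pow_mul_qPoch hq z m).mul_left _)

/-- the q-integral analogue of the power rule. -/
theorem stmt_4 (ℓ : ℕ) (hℓ : 2 ≤ ℓ) (q : ℝ) (hq : |q| < 1) (z : ℝ) :
    z * (1 - q) * ∑' k : ℕ, q ^ k * qPoch (q ^ (k + 1) * z) q (ℓ - 1) =
      (1 - q) * (1 - qPoch z q ℓ) / (1 - q ^ ℓ) := by
  obtain ⟨m, rfl⟩ : ∃ m, ℓ = m + 1 := ⟨ℓ - 1, by omega⟩
  have hsum := (hasSum_mul_pow_mul_qPoch hq z m).tsum_eq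
  rw [tsum_mul_left] at hsum
  have hne : 1 - q ^ (m + 1) ≠ 0 := by
    have : |q ^ (m + 1)| < 1 := by
      rw [abs_pow]
      exact pow_lt_one₀ (abs_nonneg q) hq (by omega)
    intro h
    simp [sub_eq_zero.mp h |>.symm] at this
  rw [Nat.add_sub_cancel, eq_div_iff hne]
  linear_combination (1 - q) * hsum
end

section
/- For any prime p and ℓ ≥ 2, the expected value of B(ℓ, p^a)/p^{(ℓ-1)a}, where a is a geometric random variable with P(a = k) = (1 - 1/p)·p^{-k} for k ≥ 0, equals 1/((1 - p^{-2})(1 - p^{-3})···(1 - p^{-ℓ})). -/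
/-- B(ℓ,n) as a sum over multiplicative flags d1 | d2 | ··· | d_{ℓ-1} | n. -/
def Bflag (ℓ n : ℕ) : ℕ :=
  ∑ d ∈ (Fintype.piFinset fun _ : Fin (ℓ-1) => Finset.range (n+1)) |>.filter
      (fun d => (∀ i j : Fin (ℓ-1), (i:ℕ)+1 = (j:ℕ) → d i ∣ d j) ∧
        ∀ i : Fin (ℓ-1), (i:ℕ) = ℓ - 2 → d i ∣ n),
    ∏ i, d i

lemma chain_dvd {r : ℕ} (d : Fin (r+1) → ℕ)
    (h : ∀ i j : Fin (r+1), (i:ℕ)+1 = (j:ℕ) → d i ∣ d j) :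
    ∀ i, d i ∣ d (Fin.last r) := by
  have key : ∀ s : ℕ, ∀ i : Fin (r+1), (i:ℕ) + s = r → d i ∣ d (Fin.last r) := by
    intro s
    induction s with
    | zero =>
      intro i hi
      have : i = Fin.last r := by ext; simpa using hi
      rw [this]
    | succ s ih =>
      intro i hi
      have hj : (i:ℕ) + 1 < r + 1 := by omega
      exact (h i ⟨(i:ℕ)+1, hj⟩ rfl).trans (ih ⟨(i:ℕ)+1, hj⟩ (by simp; omega))
  intro i
  exact key (r - i) i (by have := i.isLt; omega)

lemma Bflag_succ (r n : ℕ) (hn : n ≠ 0) :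
    Bflag (r+2) n = ∑ t ∈ n.divisors, t * Bflag (r+1) t := by
  unfold Bflag
  show (∑ d ∈ (Fintype.piFinset fun _ : Fin (r+1) => Finset.range (n+1)) |>.filter
      (fun d => (∀ i j : Fin (r+1), (i:ℕ)+1 = (j:ℕ) → d i ∣ d j) ∧
        ∀ i : Fin (r+1), (i:ℕ) = r → d i ∣ n), ∏ i, d i)
    = ∑ t ∈ n.divisors, t * ∑ e ∈ ((Fintype.piFinset fun _ : Fin r => Finset.range (t+1)) |>.filter
      (fun e => (∀ i j : Fin r, (i:ℕ)+1 = (j:ℕ) → e i ∣ e j) ∧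
        ∀ i : Fin r, (i:ℕ) = r - 1 → e i ∣ t)), ∏ i, e i
  simp only [Finset.mul_sum]
  rw [Finset.sum_sigma']
  refine Finset.sum_nbij' (i := fun d => (⟨d (Fin.last r), Fin.init d⟩ : Σ _ : ℕ, Fin r → ℕ))
    (j := fun te => Fin.snoc te.2 te.1) ?_ ?_ ?_ ?_ ?_
  · -- hi
    intro d hd
    rw [Finset.mem_filter, Fintype.mem_piFinset] at hd
    obtain ⟨hmem, hchain, hlast⟩ := hd
    have hdlast : d (Fin.last r) ∣ n := hlast (Fin.last r) (by simp)
    have hpos : 0 < d (Fin.last r) := Nat.pos_of_ne_zero (by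
      rintro h0; rw [h0] at hdlast; exact hn (Nat.eq_zero_of_zero_dvd hdlast))
    rw [Finset.mem_sigma]
    refine ⟨Nat.mem_divisors.2 ⟨hdlast, hn⟩, ?_⟩
    rw [Finset.mem_filter, Fintype.mem_piFinset]
    refine ⟨fun i => ?_, fun i j hij => ?_, fun i hi => ?_⟩
    · rw [Finset.mem_range]
      exact Nat.lt_succ_of_le (Nat.le_of_dvd hpos (chain_dvd d hchain _))
    · exact hchain (Fin.castSucc i) (Fin.castSucc j) (by simpa using hij)
    · have hr : 1 ≤ r := Nat.one_le_iff_ne_zero.2 (by rintro rfl; exact absurd i.isLt (by omega))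
      exact hchain (Fin.castSucc i) (Fin.last r) (by simp [hi]; omega)
  · -- hj
    rintro ⟨t, e⟩ hte
    rw [Finset.mem_sigma, Nat.mem_divisors, Finset.mem_filter, Fintype.mem_piFinset] at hte
    obtain ⟨⟨htn, -⟩, hmem, hchain, hlast⟩ := hte
    dsimp only at hmem hchain hlast htn ⊢
    have htle : t ≤ n := Nat.le_of_dvd (Nat.pos_of_ne_zero hn) htn
    rw [Finset.mem_filter, Fintype.mem_piFinset]
    refine ⟨fun i => ?_, fun i j hij => ?_, fun i hi => ?_⟩
    · rw [Finset.mem_range]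
      rcases Fin.eq_castSucc_or_eq_last i with ⟨i', rfl⟩ | rfl
      · simp only [Fin.snoc_castSucc]
        have := Finset.mem_range.1 (hmem i')
        omega
      · simpa [Fin.snoc_last] using Nat.lt_succ_of_le htle
    · rcases Fin.eq_castSucc_or_eq_last j with ⟨j', rfl⟩ | rfl
      · have hjv : (j':ℕ) < r := j'.isLt
        have hij2 : (i:ℕ) + 1 = (j':ℕ) := by simpa using hij
        have hiv : (i:ℕ) < r := by omega
        have hieq : i = Fin.castSucc ⟨(i:ℕ), hiv⟩ := by ext; simp
        rw [hieq, Fin.snoc_castSucc, Fin.snoc_castSucc]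
        exact hchain ⟨(i:ℕ), hiv⟩ j' (by simpa using hij2)
      · have hir : (i:ℕ) + 1 = r := by simpa using hij
        have hiv : (i:ℕ) < r := by omega
        have hieq : i = Fin.castSucc ⟨(i:ℕ), hiv⟩ := by ext; simp
        rw [hieq, Fin.snoc_castSucc, Fin.snoc_last]
        exact hlast ⟨(i:ℕ), hiv⟩ (by simp; omega)
    · have : i = Fin.last r := by ext; simpa using hi
      rw [this, Fin.snoc_last]
      exact htn
  · intro d _
    exact Fin.snoc_init_self d
  · rintro ⟨t, e⟩ _
    simp [Fin.init_snoc, Fin.snoc_last]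
  · intro d _
    rw [Fin.prod_univ_castSucc, mul_comm]
    rfl

lemma Bflag_one (n : ℕ) : Bflag 1 n = 1 := by
  simp [Bflag]

lemma Bflag_succ_pow {p : ℕ} (hp : p.Prime) (r k : ℕ) :
    Bflag (r+2) (p^k) = ∑ j ∈ Finset.range (k+1), p^j * Bflag (r+1) (p^j) := by
  rw [Bflag_succ r (p^k) (pow_ne_zero k hp.ne_zero), Nat.divisors_prime_pow hp, Finset.sum_map]
  rfl

lemma key_lemma {p : ℕ} (hp : p.Prime) :
    ∀ ℓ, 1 ≤ ℓ →
    Summable (fun k => (Bflag ℓ (p^k) : ℝ) * (1/(p:ℝ))^(ℓ*k)) ∧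
    ∑' k, (Bflag ℓ (p^k) : ℝ) * (1/(p:ℝ))^(ℓ*k)
      = ∏ j ∈ Finset.Icc 1 ℓ, (1 - (1/(p:ℝ))^j)⁻¹ := by
  have hp0 : (0:ℝ) < p := by exact_mod_cast hp.pos
  have hpne : (p:ℝ) ≠ 0 := ne_of_gt hp0
  set q : ℝ := 1/(p:ℝ) with hq
  have hq0 : 0 ≤ q := by positivity
  have hq1 : q < 1 := by
    rw [hq, div_lt_one hp0]
    exact_mod_cast hp.one_lt
  intro ℓ hℓ1
  induction ℓ, hℓ1 using Nat.le_induction with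
  | base =>
    constructor
    · apply Summable.congr (summable_geometric_of_lt_one hq0 hq1)
      intro k; simp [Bflag_one]
    · rw [tsum_congr (fun k => by simp [Bflag_one] : ∀ k, (Bflag 1 (p^k) : ℝ) * q^(1*k) = q^k)]
      rw [tsum_geometric_of_lt_one hq0 hq1]
      simp
  | succ ℓ hℓ ih =>
    obtain ⟨Sf, Tf⟩ := ih
    set f : ℕ → ℝ := fun j => (Bflag ℓ (p^j) : ℝ) * q^(ℓ*j) with hf
    set g : ℕ → ℝ := fun i => (q^(ℓ+1))^i with hgdef
    have hqs1 : q^(ℓ+1) < 1 := pow_lt_one₀ hq0 hq1 (by omega)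
    have hqs0 : 0 ≤ q^(ℓ+1) := pow_nonneg hq0 _
    have hg : Summable g := summable_geometric_of_lt_one hqs0 hqs1
    have hf_nonneg : ∀ j, 0 ≤ f j := fun j => mul_nonneg (Nat.cast_nonneg _) (pow_nonneg hq0 _)
    have hg_nonneg : ∀ i, 0 ≤ g i := fun i => pow_nonneg hqs0 _
    have hf_norm : Summable fun j => ‖f j‖ := by
      apply Sf.congr; intro j; rw [Real.norm_of_nonneg (hf_nonneg j)]
    have hg_norm : Summable fun i => ‖g i‖ := by
      apply hg.congr; intro i; rw [Real.norm_of_nonneg (hg_nonneg i)]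
    -- pointwise identity
    have hpoint : ∀ k, (Bflag (ℓ+1) (p^k) : ℝ) * q^((ℓ+1)*k)
        = ∑ j ∈ Finset.range (k+1), f j * g (k - j) := by
      intro k
      obtain ⟨r, rfl⟩ : ∃ r, ℓ = r + 1 := ⟨ℓ - 1, by omega⟩
      rw [Bflag_succ_pow hp r k]
      push_cast
      rw [Finset.sum_mul]
      apply Finset.sum_congr rfl
      intro j hj
      rw [Finset.mem_range] at hj
      obtain ⟨m, rfl⟩ : ∃ m, k = j + m := ⟨k - j, by omega⟩
      have hsub : j + m - j = m := by omega
      rw [hsub]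
      show ((p:ℝ)^j * (Bflag (r+1) (p^j) : ℝ)) * q^((r+1+1)*(j+m))
          = ((Bflag (r+1) (p^j) : ℝ) * q^((r+1)*j)) * (q^(r+1+1))^m
      have hpq : (p:ℝ)^j * q^((r+1+1)*(j+m)) = q^((r+1)*j) * q^((r+1+1)*m) := by
        have hA : (r+1+1)*(j+m) = j + ((r+1)*j + (r+1+1)*m) := by ring
        rw [hA, pow_add, pow_add, ← mul_assoc, ← mul_assoc,
          show (p:ℝ)^j * q^j = 1 by
            rw [hq, div_pow, one_pow, mul_one_div, div_self (pow_ne_zero _ hpne)],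
          one_mul]
      rw [← pow_mul, mul_comm ((p:ℝ)^j) ((Bflag (r+1) (p^j) : ℝ)), mul_assoc, hpq]
      ring
    have hsum : Summable fun k => (Bflag (ℓ+1) (p^k) : ℝ) * q^((ℓ+1)*k) := by
      apply ((summable_norm_sum_mul_range_of_summable_norm hf_norm hg_norm).of_norm).congr
      intro k; exact (hpoint k).symm
    refine ⟨hsum, ?_⟩
    rw [tsum_congr hpoint, ← tsum_mul_tsum_eq_tsum_sum_range_of_summable_norm hf_norm hg_norm]
    rw [Tf, hgdef]
    rw [tsum_geometric_of_lt_one hqs0 hqs1]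
    rw [Finset.prod_Icc_succ_top (by omega : 1 ≤ ℓ + 1)]

/-- expectation of B(ℓ,p^a)/p^{(ℓ-1)a} for a geometric random
variable a with P(a=k) = (1-1/p)p^{-k} equals ∏_{j=2}^ℓ (1-p^{-j})⁻¹. -/
theorem stmt_7 (ℓ : ℕ) (hℓ : 2 ≤ ℓ) (p : ℕ) (hp : p.Prime) :
    (1 - 1 / (p : ℝ)) *
      ∑' k : ℕ, (1 / (p : ℝ)) ^ k * ((Bflag ℓ (p ^ k) : ℝ) / (p : ℝ) ^ ((ℓ - 1) * k)) =
      ∏ j ∈ Finset.Icc 2 ℓ, (1 - (1 / (p : ℝ)) ^ j)⁻¹ := by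
  have hp0 : (0:ℝ) < p := by exact_mod_cast hp.pos
  have hq1 : 1/(p:ℝ) < 1 := by
    rw [div_lt_one hp0]; exact_mod_cast hp.one_lt
  have hne : 1 - 1/(p:ℝ) ≠ 0 := by
    intro h; nlinarith
  obtain ⟨m, rfl⟩ : ∃ m, ℓ = m + 2 := ⟨ℓ - 2, by omega⟩
  obtain ⟨-, T⟩ := key_lemma hp (m+2) (by omega)
  have hterm : ∀ k : ℕ, (1/(p:ℝ))^k * ((Bflag (m+2) (p^k) : ℝ) / (p:ℝ)^((m+2-1)*k))
      = (Bflag (m+2) (p^k) : ℝ) * (1/(p:ℝ))^((m+2)*k) := by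
    intro k
    rw [show (m+2-1)*k = (m+1)*k from rfl,
      show (m+2)*k = k + (m+1)*k by ring, pow_add]
    rw [one_div, inv_pow, inv_pow]
    field_simp
  rw [tsum_congr hterm, T]
  have hsplit : Finset.Icc 1 (m+2) = insert 1 (Finset.Icc 2 (m+2)) := by
    ext x; simp only [Finset.mem_Icc, Finset.mem_insert]; omega
  rw [hsplit, Finset.prod_insert (by simp), pow_one, ← mul_assoc,
    mul_inv_cancel₀ hne, one_mul]
end

section
/- For ℓ ≥ 2, the Cesàro mean of the generalized abundancy index converges: lim_{N→∞} (1/N) Σ_{n=1}^{N} B(ℓ,n)/n^{ℓ-1} = ζ(2)·ζ(3)···ζ(ℓ). -/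
/-!
Write `g_k(n) = B(k+1, n) / n^k`. Splitting off the last entry of a flag gives
`B(k+2, n) = ∑_{a ∣ n} a B(k+1, a)`, i.e. `g_{k+1} = n^{-(k+1)} ∗ g_k` as a Dirichlet convolution.
If `g` has mean value `L` and `∑ h(c)/c = H` converges absolutely, then `h ∗ g` has mean value
`H L`: the partial sums of `h ∗ g` are `∑_{c ≤ N} h(c) ∑_{m ≤ N/c} g(m)`, the inner sums are
`O(N/c)`, so dominated convergence applies termwise in `c`. Since `g_0 = 1` has mean value `1`,
induction on `k` gives the mean value `ζ(2) ζ(3) ⋯ ζ(k+1)` of `g_k`.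
-/

open Filter

/-- ζ(j) = Σ_{m ≥ 1} m^{-j}. -/
noncomputable def zetaR (j : ℕ) : ℝ := ∑' m : ℕ+, (1 : ℝ) / (m : ℝ) ^ j

open Finset

def dvdFlags (k n : ℕ) : Finset (Fin k → ℕ) :=
  (Fintype.piFinset fun _ : Fin k => range (n + 1)).filter
    (fun d => (∀ i j : Fin k, (i : ℕ) + 1 = (j : ℕ) → d i ∣ d j) ∧
      ∀ i : Fin k, (i : ℕ) = k - 1 → d i ∣ n)

def flagSum (k n : ℕ) : ℕ := ∑ d ∈ dvdFlags k n, ∏ i, d i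

lemma Bflag_eq_flagSum (ℓ n : ℕ) : Bflag ℓ n = flagSum (ℓ - 1) n := rfl

lemma dvd_of_le_of_forall_dvd_succ {k : ℕ} {d : Fin k → ℕ}
    (h : ∀ i j : Fin k, (i : ℕ) + 1 = j → d i ∣ d j) {i j : Fin k} (hij : i ≤ j) :
    d i ∣ d j := by
  obtain ⟨j, hj⟩ := j
  change (i : ℕ) ≤ j at hij
  induction j with
  | zero => rw [show i = ⟨0, hj⟩ from Fin.ext (Nat.le_zero.1 hij)]
  | succ j ih =>
    rcases hij.lt_or_eq with hlt | heq
    · exact (ih (by omega) (by omega)).trans (h _ _ rfl)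
    · rw [show i = ⟨j + 1, hj⟩ from Fin.ext heq]

lemma dvd_top_of_forall_dvd_succ {k n : ℕ} {d : Fin k → ℕ}
    (hchain : ∀ i j : Fin k, (i : ℕ) + 1 = j → d i ∣ d j)
    (hlast : ∀ i : Fin k, (i : ℕ) = k - 1 → d i ∣ n) (i : Fin k) : d i ∣ n := by
  have hk : k - 1 < k := by have := i.isLt; omega
  have hi : i ≤ ⟨k - 1, hk⟩ := by change (i : ℕ) ≤ k - 1; omega
  exact (dvd_of_le_of_forall_dvd_succ hchain hi).trans (hlast _ rfl)

lemma snoc_mem_dvdFlags {k n a : ℕ} {p : Fin k → ℕ} (hn : n ≠ 0) :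
    (Fin.snoc p a : Fin (k + 1) → ℕ) ∈ dvdFlags (k + 1) n ↔ a ∈ n.divisors ∧ p ∈ dvdFlags k a := by
  simp only [dvdFlags, mem_filter, Fintype.mem_piFinset, mem_range, Nat.mem_divisors,
    Fin.forall_fin_succ', Fin.snoc_castSucc, Fin.snoc_last, Fin.val_castSucc, Fin.val_last,
    add_tsub_cancel_right, Order.lt_add_one_iff]
  constructor
  · rintro ⟨⟨-, -⟩, ⟨hchain, -⟩, -, hlast⟩
    have ha : a ∣ n := hlast trivial
    have hlast' : ∀ i : Fin k, (i : ℕ) = k - 1 → p i ∣ a := fun i hi => (hchain i).2 (by omega)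
    have hchain' : ∀ i j : Fin k, (i : ℕ) + 1 = j → p i ∣ p j := fun i j => (hchain i).1 j
    exact ⟨⟨ha, hn⟩, fun i => Nat.le_of_dvd (Nat.pos_of_dvd_of_pos ha (by omega))
      (dvd_top_of_forall_dvd_succ hchain' hlast' i), hchain', hlast'⟩
  · rintro ⟨⟨ha, -⟩, -, hchain, hlast⟩
    have han : a ≤ n := Nat.le_of_dvd (by omega) ha
    refine ⟨⟨fun i => ?_, han⟩, ⟨fun i => ⟨hchain i, fun hi => hlast i (by omega)⟩,
      fun i hi => by omega, by omega⟩, fun i hi => by omega, fun _ => ha⟩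
    exact (Nat.le_of_dvd (Nat.pos_of_dvd_of_pos ha (by omega))
      (dvd_top_of_forall_dvd_succ hchain hlast i)).trans han

lemma flagSum_succ (k : ℕ) {n : ℕ} (hn : n ≠ 0) :
    flagSum (k + 1) n = ∑ a ∈ n.divisors, a * flagSum k a := by
  simp only [flagSum, mul_sum]
  rw [sum_sigma']
  refine sum_nbij' (fun d => ⟨d (Fin.last k), Fin.init d⟩) (fun p => Fin.snoc p.2 p.1)
    (fun d hd => ?_) (fun p hp => (snoc_mem_dvdFlags hn).2 (mem_sigma.1 hp))
    (fun d _ => Fin.snoc_init_self d) (fun p _ => by simp [Fin.init_snoc, Fin.snoc_last])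
    (fun d _ => by rw [Fin.prod_univ_castSucc, mul_comm]; rfl)
  rw [← Fin.snoc_init_self d, snoc_mem_dvdFlags hn] at hd
  exact mem_sigma.2 hd

lemma flagSum_zero (n : ℕ) : flagSum 0 n = 1 := by simp [flagSum, dvdFlags]

open ArithmeticFunction Topology

-- `flagAbundancy k n = B(k + 1, n) / n ^ k` for `n ≠ 0`.
noncomputable def flagAbundancy (k : ℕ) : ArithmeticFunction ℝ :=
  ⟨fun n => if n = 0 then 0 else (flagSum k n : ℝ) / (n : ℝ) ^ k, if_pos rfl⟩

noncomputable def invPow (s : ℕ) : ArithmeticFunction ℝ :=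
  ⟨fun n => if n = 0 then 0 else ((n : ℝ) ^ s)⁻¹, if_pos rfl⟩

lemma flagAbundancy_apply {k n : ℕ} (hn : n ≠ 0) :
    flagAbundancy k n = (flagSum k n : ℝ) / (n : ℝ) ^ k := if_neg hn

lemma invPow_apply {s n : ℕ} (hn : n ≠ 0) : invPow s n = ((n : ℝ) ^ s)⁻¹ := if_neg hn

lemma flagAbundancy_succ (k : ℕ) : flagAbundancy (k + 1) = invPow (k + 1) * flagAbundancy k := by
  ext n
  rcases eq_or_ne n 0 with rfl | hn
  · simp
  rw [mul_apply, Nat.sum_divisorsAntidiagonal' (fun c m => invPow (k + 1) c * flagAbundancy k m),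
    flagAbundancy_apply hn, flagSum_succ k hn]
  push_cast
  rw [sum_div]
  refine sum_congr rfl fun m hm => ?_
  obtain ⟨⟨c, rfl⟩, hn⟩ := Nat.mem_divisors.1 hm
  have hm0 : m ≠ 0 := left_ne_zero_of_mul hn
  have hc0 : c ≠ 0 := right_ne_zero_of_mul hn
  rw [Nat.mul_div_cancel_left c (Nat.pos_of_ne_zero hm0), invPow_apply hc0,
    flagAbundancy_apply hm0]
  push_cast
  field_simp
  ring

lemma hasSum_invPow_succ_div (k : ℕ) :
    HasSum (fun c : ℕ => invPow (k + 1) c / c) (zetaR (k + 2)) := by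
  have hfun : (fun c : ℕ => invPow (k + 1) c / c) = fun c : ℕ => 1 / (c : ℝ) ^ (k + 2) := by
    ext c
    rcases eq_or_ne c 0 with rfl | hc
    · simp
    rw [invPow_apply hc]
    field_simp
    ring
  rw [hfun]
  have hs := summable_pnat_iff_summable_nat.2
    (Real.summable_one_div_nat_pow.2 (by omega : 1 < k + 2))
  simpa [zetaR] using (hasSum_pnat_iff (f := fun c : ℕ => 1 / (c : ℝ) ^ (k + 2))).1 hs.hasSum

def HasMeanValue (f : ℕ → ℝ) (L : ℝ) : Prop :=
  Tendsto (fun N : ℕ => (∑ n ∈ Ioc 0 N, f n) / N) atTop (𝓝 L)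

lemma HasMeanValue.exists_abs_sum_le {f : ℕ → ℝ} {L : ℝ} (h : HasMeanValue f L) :
    ∃ C, ∀ N : ℕ, |∑ n ∈ Ioc 0 N, f n| ≤ C * N := by
  unfold HasMeanValue at h
  obtain ⟨C, hC⟩ := h.abs.bddAbove_range
  refine ⟨C, fun N => ?_⟩
  rcases N.eq_zero_or_pos with rfl | hN
  · simp
  have : |(∑ n ∈ Ioc 0 N, f n) / N| ≤ C := hC ⟨N, rfl⟩
  rwa [abs_div, Nat.abs_cast, div_le_iff₀ (by positivity)] at this

lemma tendsto_natCast_div_div (c : ℕ) :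
    Tendsto (fun N : ℕ => ((N / c : ℕ) : ℝ) / N) atTop (𝓝 (c : ℝ)⁻¹) := by
  refine ((tendsto_nat_floor_mul_div_atTop (R := ℝ) (a := (c : ℝ)⁻¹) (by positivity)).comp
    tendsto_natCast_atTop_atTop).congr fun N => ?_
  simp [← Nat.floor_div_eq_div (K := ℝ), div_eq_inv_mul]

lemma HasMeanValue.mul {f g : ArithmeticFunction ℝ} {H L : ℝ} (hg : HasMeanValue g L)
    (hf : HasSum (fun c : ℕ => f c / c) H) : HasMeanValue ⇑(f * g) (H * L) := by
  obtain ⟨C, hC⟩ := hg.exists_abs_sum_le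
  have hC0 : 0 ≤ C := (abs_nonneg _).trans (by simpa using hC 1)
  set S : ℕ → ℝ := fun M => ∑ m ∈ Ioc 0 M, g m
  set F : ℕ → ℕ → ℝ := fun N c => f c * S (N / c) / N
  have hF : ∀ N : ℕ, ∑' c, F N c = (∑ n ∈ Ioc 0 N, (f * g) n) / N := by
    intro N
    rw [sum_Ioc_mul_eq_sum_sum, sum_div, tsum_eq_sum fun c hc => ?_]
    have : N / c = 0 := by
      rcases eq_or_ne c 0 with rfl | hc0
      · exact Nat.div_zero N
      · exact Nat.div_eq_of_lt (by simp [mem_Ioc] at hc; omega)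
    simp [F, S, this]
  have hlim : ∀ c, Tendsto (fun N => F N c) atTop (𝓝 (f c / c * L)) := by
    intro c
    rcases eq_or_ne c 0 with rfl | hc
    · simp [F]
    have hmean : Tendsto (fun N : ℕ => S (N / c) / (N / c : ℕ)) atTop (𝓝 L) :=
      hg.comp (Nat.tendsto_div_const_atTop hc)
    have hprod := (hmean.mul (tendsto_natCast_div_div c)).const_mul (f c)
    rw [show f c * (L * (c : ℝ)⁻¹) = f c / c * L by ring] at hprod
    refine hprod.congr' ?_
    filter_upwards [eventually_ge_atTop c] with N hN
    have : ((N / c : ℕ) : ℝ) ≠ 0 := by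
      exact_mod_cast (Nat.div_pos hN (Nat.pos_of_ne_zero hc)).ne'
    simp only [F]
    field_simp
  have hbound : ∀ᶠ N in atTop, ∀ c, ‖F N c‖ ≤ C * |f c / c| := by
    filter_upwards [eventually_ge_atTop 1] with N hN c
    have hN0 : (0 : ℝ) < N := by exact_mod_cast hN
    calc ‖F N c‖ = |f c| * |S (N / c)| / N := by simp [F]
      _ ≤ |f c| * (C * (N / c : ℝ)) / N := by
        gcongr
        exact (hC _).trans (mul_le_mul_of_nonneg_left Nat.cast_div_le hC0)
      _ = C * |f c / c| := by
        rw [abs_div, Nat.abs_cast]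
        field_simp
  have := tendsto_tsum_of_dominated_convergence (hf.summable.abs.mul_left C) hlim hbound
  rw [(hf.mul_right L).tsum_eq] at this
  exact this.congr hF

lemma hasMeanValue_flagAbundancy_zero : HasMeanValue (flagAbundancy 0) 1 := by
  refine tendsto_const_nhds.congr' ?_
  filter_upwards [eventually_ge_atTop 1] with N hN
  rw [sum_congr rfl fun n hn => by
    rw [flagAbundancy_apply (mem_Ioc.1 hn).1.ne', flagSum_zero]]
  have hN0 : (N : ℝ) ≠ 0 := by positivity
  simp [hN0]

theorem hasMeanValue_flagAbundancy (k : ℕ) :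
    HasMeanValue (flagAbundancy k) (∏ j ∈ Icc 2 (k + 1), zetaR j) := by
  induction k with
  | zero =>
    rw [Icc_eq_empty (by norm_num), prod_empty]
    exact hasMeanValue_flagAbundancy_zero
  | succ k ih =>
    rw [flagAbundancy_succ, prod_Icc_succ_top (by omega), mul_comm _ (zetaR _)]
    exact ih.mul (hasSum_invPow_succ_div k)

theorem stmt_9_general (ℓ : ℕ) :
    Tendsto (fun N : ℕ => (1 / (N : ℝ)) * ∑ n ∈ Finset.Icc 1 N,
        (Bflag ℓ n : ℝ) / (n : ℝ) ^ (ℓ - 1))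
      atTop (nhds (∏ j ∈ Finset.Icc 2 ℓ, zetaR j)) := by
  have hprod : ∏ j ∈ Icc 2 ℓ, zetaR j = ∏ j ∈ Icc 2 (ℓ - 1 + 1), zetaR j := by
    rcases ℓ with _ | ℓ <;> simp
  rw [hprod]
  refine (hasMeanValue_flagAbundancy (ℓ - 1)).congr fun N => ?_
  have hIcc : Icc 1 N = Ioc 0 N := Icc_add_one_left_eq_Ioc 0 N
  rw [one_div_mul_eq_div, hIcc]
  refine congrArg (· / _) (sum_congr rfl fun n hn => ?_)
  rw [flagAbundancy_apply (mem_Ioc.1 hn).1.ne', Bflag_eq_flagSum]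

/-- the Cesàro mean of B(ℓ,n)/n^{ℓ-1} converges to ζ(2)···ζ(ℓ). -/
theorem stmt_9 (ℓ : ℕ) (hℓ : 2 ≤ ℓ) :
    Tendsto (fun N : ℕ => (1 / (N : ℝ)) * ∑ n ∈ Finset.Icc 1 N,
        (Bflag ℓ n : ℝ) / (n : ℝ) ^ (ℓ - 1))
      atTop (nhds (∏ j ∈ Finset.Icc 2 ℓ, zetaR j)) :=
  stmt_9_general ℓ
end

section
/- For all n ≥ 1, A(2,n,1) = (n-1)!·σ₁(n): the number of pairs of commuting permutations of {1,...,n} whose generated subgroup acts transitively on {1,...,n} equals (n-1)! times the sum of divisors of n. -/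
/-!
A commuting pair `(π, ρ)` is the same as an action of `ℤ²` on `Fin n`, transitive exactly when
`⟨π, ρ⟩` is. A transitive action of a group `G` on a set `X` with base point `x₀` is determined by
the stabiliser `H` of `x₀` (a subgroup of index `|X|`) and the orbit map `G ⧸ H ≃ X`, which sends
the trivial coset to `x₀`; conversely every such pair comes from the coset action, and for each `H`
there are `(|X| - 1)!` such bijections. Finally, every subgroup of index `n` of `ℤ²` is spanned
by a unique Hermite normal form basis `(a, b), (0, d)` with `a * d = n` and `0 ≤ b < d`, so there
are `∑_{d ∣ n} d = σ₁(n)` of them.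
-/

open Equiv MulAction

namespace CommutingPair

variable {P : Type*} [Group P]

def toHom (a b : P) (h : Commute a b) : Multiplicative (ℤ × ℤ) →* P :=
  ((zpowersHom P a).noncommCoprod (zpowersHom P b) fun m n => h.zpow_zpow m.toAdd n.toAdd).comp
    (MulEquiv.prodMultiplicative ℤ ℤ).toMonoidHom

theorem toHom_apply (a b : P) (h : Commute a b) (v : Multiplicative (ℤ × ℤ)) :
    toHom a b h v = a ^ v.toAdd.1 * b ^ v.toAdd.2 := rfl

def equivHom : {p : P × P // Commute p.1 p.2} ≃ (Multiplicative (ℤ × ℤ) →* P) where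
  toFun p := toHom p.1.1 p.1.2 p.2
  invFun φ := ⟨(φ (.ofAdd (1, 0)), φ (.ofAdd (0, 1))), (Commute.all _ _).map φ⟩
  left_inv p := by ext <;> simp [toHom_apply]
  right_inv φ := MonoidHom.ext fun v => by
    have hv : v = .ofAdd (1, 0) ^ v.toAdd.1 * .ofAdd (0, 1) ^ v.toAdd.2 := by
      apply Multiplicative.toAdd.injective
      ext <;> simp
    simp only [toHom_apply]
    conv_rhs => rw [hv]
    rw [map_mul, map_zpow, map_zpow]

theorem range_toHom (a b : P) (h : Commute a b) :
    (toHom a b h).range = Subgroup.closure {a, b} := by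
  refine le_antisymm ?_ ((Subgroup.closure_le _).2 ?_)
  · rintro _ ⟨v, rfl⟩
    exact Subgroup.mul_mem _ (Subgroup.zpow_mem _ (Subgroup.subset_closure (by simp)) _)
      (Subgroup.zpow_mem _ (Subgroup.subset_closure (by simp)) _)
  · rintro _ (rfl | rfl)
    · exact ⟨.ofAdd (1, 0), by simp [toHom_apply]⟩
    · exact ⟨.ofAdd (0, 1), by simp [toHom_apply]⟩

theorem card_transitive_pairs_eq_card_homs {X : Type*} [MulAction P X] :
    Nat.card {p : P × P //
        p.1 * p.2 = p.2 * p.1 ∧ IsPretransitive (Subgroup.closure {p.1, p.2}) X} =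
      Nat.card {φ : Multiplicative (ℤ × ℤ) →* P // IsPretransitive φ.range X} :=
  Nat.card_congr
    ((subtypeSubtypeEquivSubtypeInter (fun p : P × P => Commute p.1 p.2) _).symm.trans
      (equivHom.subtypeEquiv fun p => by rw [equivHom, coe_fn_mk, range_toHom]))

end CommutingPair

theorem Nat.card_equiv_of_card_eq {α β : Type*} [Finite α] [Finite β]
    (h : Nat.card α = Nat.card β) : Nat.card (α ≃ β) = (Nat.card α).factorial := by
  obtain ⟨e⟩ := Finite.card_eq.1 h
  rw [← Nat.card_perm, Nat.card_congr ((Equiv.refl α).equivCongr e)]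

theorem Nat.card_subtype_ne {α : Type*} [Finite α] (a : α) :
    Nat.card {x // x ≠ a} = Nat.card α - 1 := by
  classical
  rw [← Nat.card_congr (optionSubtypeNe a), Finite.card_option, Nat.add_sub_cancel]

theorem Nat.card_equiv_apply_eq {α β : Type*} [Finite α] [Finite β]
    (h : Nat.card α = Nat.card β) (a : α) (b : β) :
    Nat.card {e : α ≃ β // e a = b} = (Nat.card α - 1).factorial := by
  classical
  rw [Nat.card_congr ((subtypeEquiv ((optionSubtypeNe a).symm.equivCongr (Equiv.refl β))
      fun e => by simp).trans (optionSubtype b)), Nat.card_equiv_of_card_eq, Nat.card_subtype_ne]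
  rw [Nat.card_subtype_ne, Nat.card_subtype_ne, h]

namespace TransitiveAction

variable {G X : Type*} [Group G]

def ofCosets (H : Subgroup G) (e : G ⧸ H ≃ X) : G →* Perm X :=
  e.permCongrHom.toMonoidHom.comp (toPermHom G (G ⧸ H))

theorem ofCosets_apply (H : Subgroup G) (e : G ⧸ H ≃ X) (g : G) (q : G ⧸ H) :
    ofCosets H e g (e q) = e (g • q) := by
  simp [ofCosets, Equiv.permCongrHom]

theorem ofCosets_apply_one (H : Subgroup G) (e : G ⧸ H ≃ X) (g : G) :
    ofCosets H e g (e (1 : G)) = e g := by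
  rw [ofCosets_apply, Quotient.smul_coe, smul_eq_mul, mul_one]

theorem comap_stabilizer_ofCosets (H : Subgroup G) (e : G ⧸ H ≃ X) :
    (stabilizer (Perm X) (e (1 : G))).comap (ofCosets H e) = H := by
  ext g
  rw [Subgroup.mem_comap, mem_stabilizer_iff, Perm.smul_def, ofCosets_apply, e.apply_eq_iff_eq,
    ← mem_stabilizer_iff, stabilizer_quotient]

instance isPretransitive_ofCosets (H : Subgroup G) (e : G ⧸ H ≃ X) :
    IsPretransitive (ofCosets H e).range X := by
  refine ⟨fun x y => ?_⟩
  obtain ⟨g, hg⟩ := exists_smul_eq G (e.symm x) (e.symm y)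
  refine ⟨⟨ofCosets H e g, g, rfl⟩, ?_⟩
  rw [Subgroup.smul_def, Perm.smul_def, ← e.apply_symm_apply x, ofCosets_apply, hg,
    e.apply_symm_apply]

theorem mem_comap_stabilizer_iff (φ : G →* Perm X) (x₀ : X) (g h : G) :
    g⁻¹ * h ∈ (stabilizer (Perm X) x₀).comap φ ↔ φ g x₀ = φ h x₀ := by
  rw [Subgroup.mem_comap, mem_stabilizer_iff, map_mul, map_inv, mul_smul, inv_smul_eq_iff]
  exact eq_comm

def orbitMap (φ : G →* Perm X) (x₀ : X) : G ⧸ (stabilizer (Perm X) x₀).comap φ → X :=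
  Quotient.lift (fun g => φ g x₀) fun g h hgh =>
    (mem_comap_stabilizer_iff φ x₀ g h).1 (QuotientGroup.leftRel_apply.1 hgh)

theorem orbitMap_bijective (φ : G →* Perm X) [IsPretransitive φ.range X] (x₀ : X) :
    Function.Bijective (orbitMap φ x₀) := by
  constructor
  · rintro ⟨g⟩ ⟨h⟩ hgh
    exact QuotientGroup.eq.2 ((mem_comap_stabilizer_iff φ x₀ g h).2 hgh)
  · intro x
    obtain ⟨⟨_, g, rfl⟩, hg⟩ := exists_smul_eq φ.range x₀ x
    exact ⟨g, hg⟩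

variable (G X) in
abbrev MarkedCosetEquiv (x₀ : X) : Type _ :=
  Σ H : {H : Subgroup G // H.index = Nat.card X}, {e : G ⧸ H.1 ≃ X // e (1 : G) = x₀}

def ofMarkedCosetEquiv (x₀ : X) (p : MarkedCosetEquiv G X x₀) :
    {φ : G →* Perm X // IsPretransitive φ.range X} :=
  ⟨ofCosets p.1.1 p.2.1, inferInstance⟩

theorem ofMarkedCosetEquiv_injective (x₀ : X) :
    Function.Injective (ofMarkedCosetEquiv (G := G) x₀) := by
  rintro ⟨⟨H, _⟩, e, he⟩ ⟨⟨H', _⟩, e', he'⟩ h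
  have hφ : ofCosets H e = ofCosets H' e' := congrArg Subtype.val h
  obtain rfl : H = H' := by
    rw [← comap_stabilizer_ofCosets H e, ← comap_stabilizer_ofCosets H' e', he, he', hφ]
  obtain rfl : e = e' := by
    ext q
    induction q using QuotientGroup.induction_on with | H g => ?_
    rw [← ofCosets_apply_one H e, ← ofCosets_apply_one H e', he, he', hφ]
  rfl

theorem ofMarkedCosetEquiv_surjective (x₀ : X) :
    Function.Surjective (ofMarkedCosetEquiv (G := G) x₀) := by
  rintro ⟨φ, _⟩
  set e := Equiv.ofBijective _ (orbitMap_bijective φ x₀)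
  have he : e (1 : G) = x₀ := by simp [e, orbitMap]
  refine ⟨⟨⟨_, (Subgroup.index_eq_card _).trans (Nat.card_congr e)⟩, e, he⟩, Subtype.ext ?_⟩
  ext g x
  obtain ⟨q, rfl⟩ := e.surjective x
  induction q using QuotientGroup.induction_on with | H h => ?_
  rw [ofMarkedCosetEquiv, ofCosets_apply, Quotient.smul_coe]
  simp [e, orbitMap]

theorem card_transitive_homs [Finite X] [Nonempty X]
    [Finite {H : Subgroup G // H.index = Nat.card X}] :
    Nat.card {φ : G →* Perm X // IsPretransitive φ.range X} =
      (Nat.card X - 1).factorial * Nat.card {H : Subgroup G // H.index = Nat.card X} := by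
  obtain ⟨x₀⟩ := ‹Nonempty X›
  have : Fintype {H : Subgroup G // H.index = Nat.card X} := Fintype.ofFinite _
  have hquot (H : {H : Subgroup G // H.index = Nat.card X}) : Nat.card (G ⧸ H.1) = Nat.card X :=
    (Subgroup.index_eq_card _).symm.trans H.2
  have (H : {H : Subgroup G // H.index = Nat.card X}) : Finite (G ⧸ H.1) :=
    Nat.finite_of_card_ne_zero ((hquot H).trans_ne Nat.card_pos.ne')
  rw [← Nat.card_eq_of_bijective _
      ⟨ofMarkedCosetEquiv_injective x₀, ofMarkedCosetEquiv_surjective x₀⟩, Nat.card_sigma]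
  simp_rw [Nat.card_equiv_apply_eq (hquot _), hquot]
  rw [Finset.sum_const, Finset.card_univ, ← Nat.card_eq_fintype_card, smul_eq_mul, mul_comm]

end TransitiveAction

theorem Int.exists_pos_forall_mem_iff_dvd (K : AddSubgroup ℤ) {m : ℤ} (hm : m ∈ K)
    (hm0 : m ≠ 0) : ∃ g : ℕ, 0 < g ∧ ∀ x, x ∈ K ↔ (g : ℤ) ∣ x := by
  obtain ⟨g, rfl⟩ := Int.subgroup_cyclic K
  simp_rw [← AddSubgroup.zmultiples_eq_closure, Int.mem_zmultiples_iff] at hm ⊢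
  refine ⟨g.natAbs, Int.natAbs_pos.2 ?_, fun x => Int.natAbs_dvd.symm⟩
  rintro rfl
  exact hm0 (zero_dvd_iff.1 hm)

namespace IntLattice

def hnf (a d : ℕ) (b : ℤ) : AddSubgroup (ℤ × ℤ) :=
  AddSubgroup.closure {((a : ℤ), b), (0, (d : ℤ))}

variable {a d : ℕ} {b : ℤ}

theorem mem_hnf_iff {v : ℤ × ℤ} :
    v ∈ hnf a d b ↔ ∃ x y : ℤ, a * x = v.1 ∧ b * x + d * y = v.2 := by
  rw [hnf, AddSubgroup.mem_closure_pair]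
  simp only [Prod.ext_iff, Prod.fst_add, Prod.snd_add, Prod.smul_fst, Prod.smul_snd, smul_eq_mul]
  constructor <;> rintro ⟨x, y, h1, h2⟩ <;> exact ⟨x, y, by linarith, by linarith⟩

theorem index_hnf (ha : 0 < a) (hd : 0 < d) : (hnf a d b).index = a * d := by
  let f : Fin a × Fin d → (ℤ × ℤ) ⧸ hnf a d b := fun ij => ((ij.1 : ℤ), (ij.2 : ℤ))
  have hf : Function.Bijective f := by
    constructor
    · rintro ⟨i, j⟩ ⟨i', j'⟩ h
      obtain ⟨x, y, hx, hy⟩ := mem_hnf_iff.1 (QuotientAddGroup.eq.1 h)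
      simp only [Prod.fst_add, Prod.snd_add, Prod.fst_neg, Prod.snd_neg] at hx hy
      have hx0 : x = 0 := by nlinarith [i.2, i'.2]
      subst hx0
      have hy0 : y = 0 := by nlinarith [j.2, j'.2]
      subst hy0
      ext <;> simp only [Fin.val_inj] <;> omega
    · rintro ⟨v⟩
      -- reduce `v` first modulo `(a, b)`, then modulo `(0, d)`
      have hr1 := Int.emod_nonneg v.1 (Int.natCast_ne_zero.2 ha.ne')
      have hr2 := Int.emod_nonneg (v.2 - v.1 / a * b) (Int.natCast_ne_zero.2 hd.ne')
      have hr1' := Int.emod_lt_of_pos v.1 (Int.natCast_pos.2 ha)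
      have hr2' := Int.emod_lt_of_pos (v.2 - v.1 / a * b) (Int.natCast_pos.2 hd)
      refine ⟨(⟨(v.1 % a).toNat, by omega⟩, ⟨((v.2 - v.1 / a * b) % d).toNat, by omega⟩), ?_⟩
      refine QuotientAddGroup.eq.2 (mem_hnf_iff.2 ⟨v.1 / a, (v.2 - v.1 / a * b) / d, ?_, ?_⟩)
      · simp only [Prod.fst_add, Prod.fst_neg, Int.toNat_of_nonneg hr1]
        linarith [Int.emod_add_mul_ediv v.1 a]
      · simp only [Prod.snd_add, Prod.snd_neg, Int.toNat_of_nonneg hr2]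
        linarith [Int.emod_add_mul_ediv (v.2 - v.1 / a * b) d]
  rw [AddSubgroup.index_eq_card, ← Nat.card_eq_of_bijective f hf, Nat.card_prod, Nat.card_fin,
    Nat.card_fin]

theorem left_mem_hnf : ((a : ℤ), b) ∈ hnf a d b :=
  AddSubgroup.subset_closure (Set.mem_insert _ _)

theorem right_mem_hnf : ((0 : ℤ), (d : ℤ)) ∈ hnf a d b :=
  AddSubgroup.subset_closure (Set.mem_insert_of_mem _ rfl)

theorem dvd_fst_of_mem_hnf {v : ℤ × ℤ} (hv : v ∈ hnf a d b) : (a : ℤ) ∣ v.1 := by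
  obtain ⟨x, y, hx, -⟩ := mem_hnf_iff.1 hv
  exact ⟨x, hx.symm⟩

theorem dvd_sub_of_mk_mem_hnf (ha : 0 < a) {k y : ℤ} (hv : ((a : ℤ) * k, y) ∈ hnf a d b) :
    (d : ℤ) ∣ y - b * k := by
  obtain ⟨x, z, hx, hz⟩ := mem_hnf_iff.1 hv
  obtain rfl : x = k := mul_left_cancel₀ (Int.natCast_ne_zero.2 ha.ne') hx
  exact ⟨z, by linarith⟩

theorem natCast_dvd_of_hnf_eq {d₁ d₂ : ℕ} {b₁ b₂ : ℤ} (ha : 0 < a)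
    (h : hnf a d₁ b₁ = hnf a d₂ b₂) : (d₂ : ℤ) ∣ d₁ := by
  simpa using dvd_sub_of_mk_mem_hnf (b := b₂) ha (k := 0) (y := d₁)
    (by rw [mul_zero, ← h]; exact right_mem_hnf)

theorem hnf_inj {a' d' : ℕ} {b' : ℤ} (ha : 0 < a) (hb : 0 ≤ b) (hbd : b < d)
    (hb' : 0 ≤ b') (hbd' : b' < d') (h : hnf a d b = hnf a' d' b') :
    a = a' ∧ d = d' ∧ b = b' := by
  obtain rfl : a = a' := Nat.dvd_antisymm
    (Int.natCast_dvd_natCast.1 (dvd_fst_of_mem_hnf (h.symm ▸ left_mem_hnf)))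
    (Int.natCast_dvd_natCast.1 (dvd_fst_of_mem_hnf (h ▸ left_mem_hnf)))
  obtain rfl : d = d' := Nat.dvd_antisymm
    (Int.natCast_dvd_natCast.1 (natCast_dvd_of_hnf_eq ha h.symm))
    (Int.natCast_dvd_natCast.1 (natCast_dvd_of_hnf_eq ha h))
  obtain ⟨k, hk⟩ := dvd_sub_of_mk_mem_hnf (b := b') ha (k := 1) (y := b)
    (by rw [mul_one, ← h]; exact left_mem_hnf)
  obtain rfl : k = 0 := by nlinarith
  exact ⟨rfl, rfl, by linarith⟩

theorem exists_eq_hnf (H : AddSubgroup (ℤ × ℤ)) (hH : H.index ≠ 0) :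
    ∃ a d : ℕ, ∃ b : ℤ, 0 < a ∧ 0 < d ∧ 0 ≤ b ∧ b < d ∧ H = hnf a d b := by
  have hn : (H.index : ℤ) ≠ 0 := Int.natCast_ne_zero.2 hH
  obtain ⟨a, ha, hA⟩ := Int.exists_pos_forall_mem_iff_dvd (H.map (AddMonoidHom.fst ℤ ℤ))
    (AddSubgroup.mem_map_of_mem _ (H.nsmul_index_mem (1, 0))) (by simpa using hn)
  obtain ⟨d, hd, hD⟩ := Int.exists_pos_forall_mem_iff_dvd (H.comap (AddMonoidHom.inr ℤ ℤ))
    (m := H.index) (by simpa using H.nsmul_index_mem (0, 1)) hn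
  obtain ⟨⟨_, y₀⟩, hy₀, rfl⟩ := AddSubgroup.mem_map.1 ((hA a).2 dvd_rfl)
  have hdmem : ((0 : ℤ), (d : ℤ)) ∈ H := (hD d).2 dvd_rfl
  have hdz : (0 : ℤ) < d := Int.natCast_pos.2 hd
  have habmem : (((a : ℤ)), y₀ % d) ∈ H := by
    convert H.sub_mem hy₀ (H.zsmul_mem hdmem (y₀ / d)) using 1
    ext <;> simp [Int.emod_def, mul_comm]
  refine ⟨a, d, y₀ % d, ha, hd, Int.emod_nonneg _ hdz.ne', Int.emod_lt_of_pos _ hdz,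
    le_antisymm (fun v hv => ?_) ?_⟩
  · obtain ⟨x, hx⟩ := (hA v.1).1 (AddSubgroup.mem_map_of_mem _ hv)
    obtain ⟨y, hy⟩ := (hD (v.2 - y₀ % d * x)).1 (AddSubgroup.mem_comap.2 (by
      convert H.sub_mem hv (H.zsmul_mem habmem x) using 1
      ext <;> simp [hx, mul_comm]))
    exact mem_hnf_iff.2 ⟨x, y, hx.symm, by linarith⟩
  · rw [hnf, AddSubgroup.closure_le]
    exact Set.insert_subset habmem (Set.singleton_subset_iff.2 hdmem)

theorem card_addSubgroups_of_index {n : ℕ} (hn : 0 < n) :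
    Nat.card {H : AddSubgroup (ℤ × ℤ) // H.index = n} = ArithmeticFunction.sigma 1 n := by
  have hpos {p : ℕ × ℕ} (hp : p ∈ n.divisorsAntidiagonal) : 0 < p.1 ∧ 0 < p.2 :=
    ⟨Nat.pos_of_ne_zero (Nat.left_ne_zero_of_mem_divisorsAntidiagonal hp),
      Nat.pos_of_ne_zero (Nat.right_ne_zero_of_mem_divisorsAntidiagonal hp)⟩
  let f (p : Σ p : n.divisorsAntidiagonal, Fin p.1.2) :
      {H : AddSubgroup (ℤ × ℤ) // H.index = n} :=
    ⟨hnf p.1.1.1 p.1.1.2 p.2, (index_hnf (hpos p.1.2).1 (hpos p.1.2).2).trans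
      (Nat.mem_divisorsAntidiagonal.1 p.1.2).1⟩
  have hf : Function.Bijective f := by
    constructor
    · rintro ⟨⟨⟨a, d⟩, hp⟩, b⟩ ⟨⟨⟨a', d'⟩, _⟩, b'⟩ h
      obtain ⟨rfl, rfl, hb⟩ := hnf_inj (hpos hp).1 (by positivity)
        (by simp) (by positivity) (by simp) (congrArg Subtype.val h)
      obtain rfl : b = b' := Fin.ext (by simpa using hb)
      rfl
    · rintro ⟨H, hH⟩
      obtain ⟨a, d, b, ha, hd, hb, hbd, rfl⟩ := exists_eq_hnf H (hH.trans_ne hn.ne')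
      have hp : (a, d) ∈ n.divisorsAntidiagonal :=
        Nat.mem_divisorsAntidiagonal.2 ⟨(index_hnf ha hd).symm.trans hH, hn.ne'⟩
      exact ⟨⟨⟨(a, d), hp⟩, ⟨b.toNat, show b.toNat < d by omega⟩⟩, Subtype.ext (by simp [f, hb])⟩
  rw [← Nat.card_eq_of_bijective f hf, Nat.card_sigma]
  simp only [Nat.card_eq_fintype_card, Fintype.card_fin]
  rw [Finset.sum_coe_sort n.divisorsAntidiagonal (fun p => p.2), Nat.sum_divisorsAntidiagonal'
    (f := fun _ d => d), ArithmeticFunction.sigma_one_apply]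

end IntLattice

/-- the number of commuting pairs of permutations of {1,...,n}
generating a transitive subgroup equals (n-1)!·σ₁(n). -/
theorem stmt_13 (n : ℕ) (hn : 1 ≤ n) :
    Nat.card {pr : Equiv.Perm (Fin n) × Equiv.Perm (Fin n) //
        pr.1 * pr.2 = pr.2 * pr.1 ∧
        MulAction.IsPretransitive (Subgroup.closure {pr.1, pr.2}) (Fin n)} =
      (n - 1).factorial * ArithmeticFunction.sigma 1 n := by
  have : NeZero n := ⟨by omega⟩
  have hsubgroups :
      Nat.card {H : Subgroup (Multiplicative (ℤ × ℤ)) // H.index = Nat.card (Fin n)} =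
        ArithmeticFunction.sigma 1 n := by
    rw [Nat.card_fin, ← IntLattice.card_addSubgroups_of_index hn]
    exact Nat.card_congr (AddSubgroup.toSubgroup.toEquiv.subtypeEquiv fun H => by simp).symm
  have : Finite {H : Subgroup (Multiplicative (ℤ × ℤ)) // H.index = Nat.card (Fin n)} :=
    Nat.finite_of_card_ne_zero (hsubgroups ▸ (ArithmeticFunction.sigma_pos 1 n (by omega)).ne')
  rw [CommutingPair.card_transitive_pairs_eq_card_homs, TransitiveAction.card_transitive_homs,
    hsubgroups, Nat.card_fin]
end

section
/- The Cesàro mean of the squared abundancy index converges: lim_{N→∞} (1/N) Σ_{n=1}^{N} (σ₁(n)/n)² = ζ(2)² ζ(3)/ζ(4). -/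
set_option maxHeartbeats 1000000

open Filter

namespace Stmt16

open scoped ENNReal
open Topology

noncomputable def Z (j : ℕ) : ℝ≥0∞ := ∑' m : ℕ+, (1 : ℝ≥0∞) / ((m : ℕ) : ℝ≥0∞) ^ j

noncomputable def T : ℝ≥0∞ := ∑' g : ℕ+, (Nat.totient g : ℝ≥0∞) / ((g : ℕ) : ℝ≥0∞) ^ 4

noncomputable def S : ℝ≥0∞ :=
  ∑' p : ℕ+ × ℕ+, (1 : ℝ≥0∞) / (((p.1 : ℕ) * (p.2 : ℕ) * Nat.lcm p.1 p.2 : ℕ) : ℝ≥0∞)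

lemma helper_div (a : ℝ≥0∞) (x y : ℕ) (hx : x ≠ 0) (hy : y ≠ 0) :
    a / ((x * y : ℕ) : ℝ≥0∞) = (a / (x : ℝ≥0∞)) * ((1 : ℝ≥0∞) / (y : ℝ≥0∞)) := by
  rw [Nat.cast_mul, div_eq_mul_inv, ENNReal.mul_inv (Or.inl (by simpa)) (Or.inr (by simpa)),
    div_eq_mul_inv, one_div, mul_assoc]

lemma tsum_div_nat (c : ℕ → ℝ≥0∞) (X : ℝ≥0∞) :
    (∑' g : ℕ, c g) / X = ∑' g : ℕ, c g / X := by
  simp only [div_eq_mul_inv, ENNReal.tsum_mul_right]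

lemma tsum_pnat_nat (c : ℕ → ℝ≥0∞) (h : c 0 = 0) : ∑' g : ℕ+, c g = ∑' g : ℕ, c g := by
  refine Function.Injective.tsum_eq PNat.coe_injective ?_
  intro n hn
  rcases Nat.eq_zero_or_pos n with rfl | hpos
  · exact absurd h hn
  · exact ⟨⟨n, hpos⟩, rfl⟩

lemma cast_eq_tsum_totient {G : ℕ} (hG : G ≠ 0) :
    ((G : ℝ≥0∞)) = ∑' g : ℕ, (if g ∣ G then (Nat.totient g : ℝ≥0∞) else 0) := by
  rw [tsum_eq_sum (s := G.divisors) (fun b hb => ?_)]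
  · rw [Finset.sum_congr rfl (fun g hg => ?_), ← Nat.cast_sum, Nat.sum_totient]
    rw [if_pos (Nat.mem_divisors.mp hg).1]
  · rw [if_neg (fun hdvd => hb (Nat.mem_divisors.mpr ⟨hdvd, hG⟩))]

/-- pointwise: 1/(d e lcm) = gcd/(de)^2 -/
lemma point1 (p : ℕ+ × ℕ+) :
    (1 : ℝ≥0∞) / (((p.1 : ℕ) * (p.2 : ℕ) * Nat.lcm p.1 p.2 : ℕ) : ℝ≥0∞)
      = ((Nat.gcd p.1 p.2 : ℕ) : ℝ≥0∞) / ((((p.1 : ℕ) * (p.2 : ℕ)) ^ 2 : ℕ) : ℝ≥0∞) := by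
  obtain ⟨d, e⟩ := p
  have hK : Nat.gcd (d : ℕ) (e : ℕ) ≠ 0 := (Nat.gcd_pos_of_pos_left _ d.pos).ne'
  have key : ((d : ℕ) * (e : ℕ)) ^ 2
      = Nat.gcd d e * ((d : ℕ) * (e : ℕ) * Nat.lcm d e) := by
    have h := Nat.gcd_mul_lcm (d : ℕ) (e : ℕ)
    calc ((d : ℕ) * (e : ℕ)) ^ 2 = (Nat.gcd d e * Nat.lcm d e) * ((d:ℕ) * (e:ℕ)) := by
          rw [h]; ring
    _ = Nat.gcd d e * ((d : ℕ) * (e : ℕ) * Nat.lcm d e) := by ring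
  rw [key]
  push_cast
  rw [← ENNReal.mul_div_mul_left ((1:ℝ≥0∞)) _ (c := ((Nat.gcd (d:ℕ) (e:ℕ) : ℕ) : ℝ≥0∞))
    (by exact_mod_cast hK) (ENNReal.natCast_ne_top _)]
  ring_nf

lemma tsum_prod_mul (u v : ℕ+ → ℝ≥0∞) :
    ∑' q : ℕ+ × ℕ+, u q.1 * v q.2 = (∑' a, u a) * (∑' b, v b) := by
  rw [ENNReal.tsum_prod']
  simp only [ENNReal.tsum_mul_left, ENNReal.tsum_mul_right]

lemma inner_g (g : ℕ+) :
    (∑' p : ℕ+ × ℕ+, (if (g : ℕ) ∣ Nat.gcd p.1 p.2 then (Nat.totient g : ℝ≥0∞) else 0)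
        / ((((p.1 : ℕ) * (p.2 : ℕ)) ^ 2 : ℕ) : ℝ≥0∞))
      = ((Nat.totient g : ℝ≥0∞) / ((g : ℕ) : ℝ≥0∞) ^ 4) * (Z 2 * Z 2) := by
  set f : ℕ+ × ℕ+ → ℝ≥0∞ := fun p =>
    (if (g : ℕ) ∣ Nat.gcd p.1 p.2 then (Nat.totient g : ℝ≥0∞) else 0)
      / ((((p.1 : ℕ) * (p.2 : ℕ)) ^ 2 : ℕ) : ℝ≥0∞) with hf
  have hinj : Function.Injective (fun q : ℕ+ × ℕ+ => (g * q.1, g * q.2)) := by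
    intro a b h
    rw [Prod.ext_iff] at h ⊢
    exact ⟨mul_left_cancel h.1, mul_left_cancel h.2⟩
  have hsupp : Function.support f ⊆ Set.range (fun q : ℕ+ × ℕ+ => (g * q.1, g * q.2)) := by
    intro x hne
    rw [Function.mem_support] at hne
    by_contra hx
    have hdvd : (g : ℕ) ∣ Nat.gcd x.1 x.2 := by
      by_contra hd
      simp [hf, hd] at hne
    have hd1 : (g : ℕ) ∣ (x.1 : ℕ) := hdvd.trans (Nat.gcd_dvd_left _ _)
    have hd2 : (g : ℕ) ∣ (x.2 : ℕ) := hdvd.trans (Nat.gcd_dvd_right _ _)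
    refine hx ⟨(⟨(x.1 : ℕ) / g, Nat.div_pos (Nat.le_of_dvd x.1.pos hd1) g.pos⟩,
               ⟨(x.2 : ℕ) / g, Nat.div_pos (Nat.le_of_dvd x.2.pos hd2) g.pos⟩), ?_⟩
    refine Prod.ext (PNat.coe_injective ?_) (PNat.coe_injective ?_)
    · exact Nat.mul_div_cancel' hd1
    · exact Nat.mul_div_cancel' hd2
  rw [← Function.Injective.tsum_eq hinj hsupp]
  have hpt : ∀ q : ℕ+ × ℕ+, f (g * q.1, g * q.2)
      = ((Nat.totient g : ℝ≥0∞) / ((g : ℕ) : ℝ≥0∞) ^ 4)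
        * (((1 : ℝ≥0∞) / ((q.1 : ℕ) : ℝ≥0∞) ^ 2) * ((1 : ℝ≥0∞) / ((q.2 : ℕ) : ℝ≥0∞) ^ 2)) := by
    intro q
    have hdvd : (g : ℕ) ∣ Nat.gcd ((g * q.1 : ℕ+) : ℕ) ((g * q.2 : ℕ+) : ℕ) := by
      simp only [PNat.mul_coe, Nat.gcd_mul_left]
      exact dvd_mul_right _ _
    have hnat : (((g * q.1 : ℕ+) : ℕ) * ((g * q.2 : ℕ+) : ℕ)) ^ 2
        = (g : ℕ) ^ 4 * ((q.1 : ℕ) ^ 2 * (q.2 : ℕ) ^ 2) := by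
      simp only [PNat.mul_coe]; ring
    simp only [hf, if_pos hdvd, hnat]
    rw [helper_div _ _ _ (by positivity) (by positivity),
        helper_div _ _ _ (by positivity) (by positivity)]
    push_cast
    ring
  rw [tsum_congr hpt, ENNReal.tsum_mul_left,
    tsum_prod_mul (fun a => (1 : ℝ≥0∞) / ((a : ℕ) : ℝ≥0∞) ^ 2)
      (fun b => (1 : ℝ≥0∞) / ((b : ℕ) : ℝ≥0∞) ^ 2)]
  rfl

lemma S_eq : S = T * (Z 2 * Z 2) := by
  rw [S, tsum_congr point1]
  have h1 : ∀ p : ℕ+ × ℕ+, ((Nat.gcd p.1 p.2 : ℕ) : ℝ≥0∞) / ((((p.1 : ℕ) * (p.2 : ℕ)) ^ 2 : ℕ) : ℝ≥0∞)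
      = ∑' g : ℕ, (if g ∣ Nat.gcd p.1 p.2 then (Nat.totient g : ℝ≥0∞) else 0)
          / ((((p.1 : ℕ) * (p.2 : ℕ)) ^ 2 : ℕ) : ℝ≥0∞) := by
    intro p
    rw [cast_eq_tsum_totient (Nat.gcd_pos_of_pos_left _ p.1.pos).ne', tsum_div_nat]
  rw [tsum_congr h1, ENNReal.tsum_comm]
  rw [← tsum_pnat_nat _ (by simp [Nat.totient_zero])]
  rw [tsum_congr inner_g, ENNReal.tsum_mul_right]
  rfl

lemma summable_zetaR {j : ℕ} (hj : 2 ≤ j) : Summable (fun m : ℕ+ => (1 : ℝ) / (m : ℝ) ^ j) := by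
  have h : Summable (fun n : ℕ => (1 : ℝ) / (n : ℝ) ^ j) :=
    Real.summable_one_div_nat_pow.mpr (by omega)
  exact (h.comp_injective PNat.coe_injective)

lemma Z_eq {j : ℕ} (hj : 2 ≤ j) : Z j = ENNReal.ofReal (∑' m : ℕ+, (1 : ℝ) / (m : ℝ) ^ j) := by
  rw [ENNReal.ofReal_tsum_of_nonneg (fun m => by positivity) (summable_zetaR hj)]
  refine tsum_congr fun m => ?_
  rw [ENNReal.ofReal_div_of_pos (by positivity), ENNReal.ofReal_one,
    ENNReal.ofReal_pow (by positivity)]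
  norm_num [ENNReal.ofReal_natCast]

lemma Z_ne_top {j : ℕ} (hj : 2 ≤ j) : Z j ≠ ⊤ := by
  rw [Z_eq hj]; exact ENNReal.ofReal_ne_top

lemma Z_toReal {j : ℕ} (hj : 2 ≤ j) : (Z j).toReal = zetaR j := by
  rw [Z_eq hj, zetaR]
  exact ENNReal.toReal_ofReal (tsum_nonneg fun m => by positivity)

lemma Z_ne_zero {j : ℕ} : Z j ≠ 0 := by
  have h1 : (1 : ℝ≥0∞) / (((1 : ℕ+) : ℕ) : ℝ≥0∞) ^ j ≤ Z j := ENNReal.le_tsum 1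
  intro h
  rw [h] at h1
  simp at h1

lemma TZ4 : T * Z 4 = Z 3 := by
  have h1 : T * Z 4 = ∑' q : ℕ+ × ℕ+,
      ((Nat.totient q.1 : ℝ≥0∞) / ((q.1 : ℕ) : ℝ≥0∞) ^ 4)
        * ((1 : ℝ≥0∞) / ((q.2 : ℕ) : ℝ≥0∞) ^ 4) := by
    unfold T Z
    exact (tsum_prod_mul (fun g : ℕ+ => (Nat.totient g : ℝ≥0∞) / ((g : ℕ) : ℝ≥0∞) ^ 4)
      (fun m : ℕ+ => (1 : ℝ≥0∞) / ((m : ℕ) : ℝ≥0∞) ^ 4)).symm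
  set F : ℕ+ × ℕ → ℝ≥0∞ := fun x =>
    (if x.2 ∣ (x.1 : ℕ) then (Nat.totient x.2 : ℝ≥0∞) else 0) / ((x.1 : ℕ) : ℝ≥0∞) ^ 4 with hF
  have hinj : Function.Injective (fun q : ℕ+ × ℕ+ => ((q.1 * q.2 : ℕ+), (q.1 : ℕ))) := by
    intro a b h
    simp only [Prod.mk.injEq] at h
    have h1 : a.1 = b.1 := PNat.coe_injective h.2
    have h2 : a.1 * a.2 = b.1 * b.2 := h.1
    rw [h1] at h2
    exact Prod.ext h1 (mul_left_cancel h2)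
  have hsupp : Function.support F ⊆
      Set.range (fun q : ℕ+ × ℕ+ => ((q.1 * q.2 : ℕ+), (q.1 : ℕ))) := by
    intro x hne
    rw [Function.mem_support] at hne
    have hdvd : x.2 ∣ (x.1 : ℕ) := by
      by_contra hd
      simp [hF, hd] at hne
    have hx2 : 0 < x.2 := by
      rcases Nat.eq_zero_or_pos x.2 with h | h
      · rw [h] at hdvd
        exact absurd (Nat.eq_zero_of_zero_dvd hdvd) x.1.pos.ne'
      · exact h
    refine ⟨(⟨x.2, hx2⟩, ⟨(x.1 : ℕ) / x.2, Nat.div_pos (Nat.le_of_dvd x.1.pos hdvd) hx2⟩), ?_⟩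
    refine Prod.ext (PNat.coe_injective ?_) rfl
    exact Nat.mul_div_cancel' hdvd
  have hpt : ∀ q : ℕ+ × ℕ+, F ((q.1 * q.2 : ℕ+), (q.1 : ℕ))
      = ((Nat.totient q.1 : ℝ≥0∞) / ((q.1 : ℕ) : ℝ≥0∞) ^ 4)
        * ((1 : ℝ≥0∞) / ((q.2 : ℕ) : ℝ≥0∞) ^ 4) := by
    intro q
    have hdvd : (q.1 : ℕ) ∣ ((q.1 * q.2 : ℕ+) : ℕ) := by
      simp only [PNat.mul_coe]; exact dvd_mul_right _ _
    have hnat : ((q.1 * q.2 : ℕ+) : ℕ) ^ 4 = (q.1 : ℕ) ^ 4 * (q.2 : ℕ) ^ 4 := by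
      simp only [PNat.mul_coe]; ring
    simp only [hF, if_pos hdvd]
    rw [show (((q.1 * q.2 : ℕ+) : ℕ) : ℝ≥0∞) ^ 4 = ((((q.1 * q.2 : ℕ+) : ℕ) ^ 4 : ℕ) : ℝ≥0∞) by
      push_cast; ring, hnat,
      helper_div _ _ _ (by positivity) (by positivity)]
    push_cast
    ring
  rw [h1, ← tsum_congr hpt, Function.Injective.tsum_eq hinj hsupp, ENNReal.tsum_prod']
  have h2 : ∀ n : ℕ+, (∑' d : ℕ, F (n, d)) = (1 : ℝ≥0∞) / ((n : ℕ) : ℝ≥0∞) ^ 3 := by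
    intro n
    have : (∑' d : ℕ, F (n, d))
        = (∑' d : ℕ, (if d ∣ (n : ℕ) then (Nat.totient d : ℝ≥0∞) else 0))
            / ((n : ℕ) : ℝ≥0∞) ^ 4 := by
      simp only [hF]
      exact (tsum_div_nat _ _).symm
    rw [this, ← cast_eq_tsum_totient n.pos.ne']
    have hnat : ((n : ℕ) : ℝ≥0∞) ^ 4 = ((n : ℕ) : ℝ≥0∞) * ((n : ℕ) : ℝ≥0∞) ^ 3 := by ring
    rw [hnat, ← ENNReal.mul_div_mul_left ((1 : ℝ≥0∞)) (((n : ℕ) : ℝ≥0∞) ^ 3)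
      (c := ((n : ℕ) : ℝ≥0∞)) (by exact_mod_cast n.pos.ne') (ENNReal.natCast_ne_top _), mul_one]
  rw [tsum_congr h2]
  rfl

lemma T_eq : T = Z 3 / Z 4 := by
  rw [ENNReal.eq_div_iff Z_ne_zero (Z_ne_top (by norm_num)), mul_comm]
  exact TZ4

lemma S_val : S = Z 2 ^ 2 * Z 3 / Z 4 := by
  rw [S_eq, T_eq]
  rw [div_eq_mul_inv, div_eq_mul_inv]
  ring

lemma S_ne_top : S ≠ ⊤ := by
  rw [S_val]
  exact (ENNReal.div_lt_top (ENNReal.mul_ne_top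
    (ENNReal.pow_ne_top (Z_ne_top (by norm_num))) (Z_ne_top (by norm_num))) Z_ne_zero).ne

/-! ### Real side -/

noncomputable def gB : ℕ × ℕ → ℝ := fun p => 1 / ((p.1 * p.2 * Nat.lcm p.1 p.2 : ℕ) : ℝ)

noncomputable def fN (N : ℕ) (p : ℕ × ℕ) : ℝ :=
  ((N / Nat.lcm p.1 p.2 : ℕ) : ℝ) / ((N : ℝ) * p.1 * p.2)

lemma fN_nonneg (N : ℕ) (p : ℕ × ℕ) : 0 ≤ fN N p := by
  unfold fN; positivity

lemma bound (N : ℕ) (p : ℕ × ℕ) : ‖fN N p‖ ≤ gB p := by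
  rw [Real.norm_of_nonneg (fN_nonneg N p)]
  obtain ⟨d, e⟩ := p
  rcases Nat.eq_zero_or_pos d with rfl | hd
  · simp [fN, gB]
  rcases Nat.eq_zero_or_pos e with rfl | he
  · simp [fN, gB]
  rcases Nat.eq_zero_or_pos N with rfl | hN
  · simp [fN, gB]; positivity
  have hL : 0 < Nat.lcm d e := Nat.pos_of_ne_zero (Nat.lcm_ne_zero hd.ne' he.ne')
  unfold fN gB
  push_cast
  rw [div_le_div_iff₀ (by positivity) (by positivity), one_mul]
  calc ((N / Nat.lcm d e : ℕ) : ℝ) * ((d : ℝ) * e * Nat.lcm d e)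
      ≤ ((N : ℝ) / (Nat.lcm d e : ℝ)) * ((d : ℝ) * e * Nat.lcm d e) := by
        apply mul_le_mul_of_nonneg_right (Nat.cast_div_le) (by positivity)
    _ = (N : ℝ) * d * e := by field_simp

lemma div_tendsto (L : ℕ) (hL : 0 < L) :
    Tendsto (fun N : ℕ => ((N / L : ℕ) : ℝ) / (N : ℝ)) atTop (𝓝 (1 / (L : ℝ))) := by
  have hLR : (0 : ℝ) < L := by exact_mod_cast hL
  apply tendsto_of_tendsto_of_tendsto_of_le_of_le'
    (g := fun N : ℕ => 1 / (L : ℝ) - 1 / (N : ℝ)) (h := fun _ : ℕ => 1 / (L : ℝ))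
  · have : Tendsto (fun N : ℕ => 1 / (N : ℝ)) atTop (𝓝 0) :=
      tendsto_one_div_atTop_nhds_zero_nat
    simpa using (tendsto_const_nhds.sub this)
  · exact tendsto_const_nhds
  · filter_upwards [eventually_ge_atTop 1] with N hN
    have hNR : (0 : ℝ) < N := by exact_mod_cast hN
    have key : (N : ℝ) / L - 1 ≤ ((N / L : ℕ) : ℝ) := by
      have hmod : N % L < L := Nat.mod_lt _ hL
      have hdm : (N : ℝ) = L * ((N / L : ℕ) : ℝ) + ((N % L : ℕ) : ℝ) := by
        exact_mod_cast (Nat.div_add_mod N L).symm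
      rw [div_sub_one hLR.ne', div_le_iff₀ hLR, sub_le_iff_le_add]
      rw [hdm]
      have : ((N % L : ℕ) : ℝ) ≤ L := by exact_mod_cast hmod.le
      nlinarith [Nat.cast_nonneg (α := ℝ) (N / L)]
    calc 1 / (L : ℝ) - 1 / N = ((N : ℝ) / L - 1) / N := by field_simp
      _ ≤ ((N / L : ℕ) : ℝ) / N := by gcongr
  · filter_upwards [eventually_ge_atTop 1] with N hN
    have hNR : (0 : ℝ) < N := by exact_mod_cast hN
    calc ((N / L : ℕ) : ℝ) / N ≤ ((N : ℝ) / L) / N := by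
          gcongr
          exact Nat.cast_div_le
      _ = 1 / L := by field_simp

lemma tendsto_fN (p : ℕ × ℕ) : Tendsto (fun N : ℕ => fN N p) atTop (𝓝 (gB p)) := by
  obtain ⟨d, e⟩ := p
  rcases Nat.eq_zero_or_pos d with rfl | hd
  · simp [fN, gB]
  rcases Nat.eq_zero_or_pos e with rfl | he
  · simp [fN, gB]
  have hL : 0 < Nat.lcm d e := Nat.pos_of_ne_zero (Nat.lcm_ne_zero hd.ne' he.ne')
  have key : ∀ N : ℕ, fN N (d, e)
      = (((N / Nat.lcm d e : ℕ) : ℝ) / (N : ℝ)) * (1 / ((d : ℝ) * e)) := by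
    intro N
    unfold fN
    rw [div_eq_mul_inv, div_eq_mul_inv, div_eq_mul_inv, mul_inv, mul_inv]
    ring
  have hgB : gB (d, e) = (1 / (Nat.lcm d e : ℝ)) * (1 / ((d : ℝ) * e)) := by
    unfold gB
    push_cast
    rw [div_mul_div_comm, one_mul]
    ring_nf
  rw [funext key, hgB]
  exact (div_tendsto _ hL).mul_const _

/-! ### Combinatorial identity -/

lemma divisors_eq_filter {n N : ℕ} (h1 : 1 ≤ n) (h2 : n ≤ N) :
    n.divisors = (Finset.Icc 1 N).filter (· ∣ n) := by
  ext d
  simp only [Nat.mem_divisors, Finset.mem_filter, Finset.mem_Icc]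
  constructor
  · rintro ⟨hd, -⟩
    exact ⟨⟨Nat.pos_of_dvd_of_pos hd h1, (Nat.le_of_dvd h1 hd).trans h2⟩, hd⟩
  · rintro ⟨-, hd⟩
    exact ⟨hd, by omega⟩

lemma sigma_div {n : ℕ} (h1 : 1 ≤ n) :
    ((ArithmeticFunction.sigma 1 n : ℕ) : ℝ) / n = ∑ d ∈ n.divisors, (1 : ℝ) / d := by
  have h0 : ((ArithmeticFunction.sigma 1 n : ℕ) : ℝ) = ∑ d ∈ n.divisors, ((n / d : ℕ) : ℝ) := by
    rw [ArithmeticFunction.sigma_one_apply]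
    exact_mod_cast (Nat.sum_div_divisors n id).symm
  have h2 : ∀ d ∈ n.divisors, ((n / d : ℕ) : ℝ) = (n : ℝ) * (1 / d) := by
    intro d hd
    obtain ⟨hdvd, hn0⟩ := Nat.mem_divisors.mp hd
    have hd0 : (d : ℝ) ≠ 0 := by
      exact_mod_cast (Nat.pos_of_dvd_of_pos hdvd h1).ne'
    rw [Nat.cast_div hdvd hd0]
    ring
  rw [h0, Finset.sum_congr rfl h2, ← Finset.mul_sum]
  field_simp

/-- The main finite rearrangement. -/
lemma finite_identity (N : ℕ) :
    ∑ n ∈ Finset.Icc 1 N, ((ArithmeticFunction.sigma 1 n : ℝ) / (n : ℝ)) ^ 2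
      = ∑ d ∈ Finset.Icc 1 N, ∑ e ∈ Finset.Icc 1 N,
          ((N / Nat.lcm d e : ℕ) : ℝ) * ((1 / d) * (1 / e)) := by
  have step1 : ∀ n ∈ Finset.Icc 1 N,
      ((ArithmeticFunction.sigma 1 n : ℝ) / (n : ℝ)) ^ 2
        = ∑ d ∈ Finset.Icc 1 N, ∑ e ∈ Finset.Icc 1 N,
            (if d ∣ n ∧ e ∣ n then (1 / d) * (1 / e : ℝ) else 0) := by
    intro n hn
    rw [Finset.mem_Icc] at hn
    rw [show ((ArithmeticFunction.sigma 1 n : ℝ)) = ((ArithmeticFunction.sigma 1 n : ℕ) : ℝ)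
        from rfl,
      sigma_div hn.1, sq, Finset.sum_mul_sum]
    rw [divisors_eq_filter hn.1 hn.2]
    rw [Finset.sum_filter]
    refine Finset.sum_congr rfl fun d hd => ?_
    rw [Finset.sum_filter] at *
    split_ifs with h1
    · refine Finset.sum_congr rfl fun e he => ?_
      split_ifs with h2 h3 h3
      · rfl
      · exact absurd ⟨h1, h2⟩ h3
      · exact absurd h3.2 h2
      · rfl
    · rw [Finset.sum_eq_zero]
      intro e he
      split_ifs with h3
      · exact absurd h3.1 h1
      · rfl
  rw [Finset.sum_congr rfl step1]
  rw [Finset.sum_comm]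
  refine Finset.sum_congr rfl fun d hd => ?_
  rw [Finset.sum_comm]
  refine Finset.sum_congr rfl fun e he => ?_
  have hcollapse : ∀ n : ℕ, (if d ∣ n ∧ e ∣ n then (1 / d) * (1 / e : ℝ) else 0)
      = (if Nat.lcm d e ∣ n then (1 / d) * (1 / e : ℝ) else 0) := by
    intro n
    simp only [Nat.lcm_dvd_iff]
  simp only [hcollapse]
  rw [← Finset.sum_filter, Finset.sum_const]
  have hicc : Finset.Icc 1 N = Finset.Ioc 0 N := rfl
  rw [hicc, Nat.Ioc_filter_dvd_card_eq_div]
  simp [mul_comm, nsmul_eq_mul]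

/-! ### glue -/

lemma fN_eq_zero {N : ℕ} {p : ℕ × ℕ}
    (hp : p ∉ Finset.Icc 1 N ×ˢ Finset.Icc 1 N) : fN N p = 0 := by
  obtain ⟨d, e⟩ := p
  simp only [Finset.mem_product, Finset.mem_Icc, not_and_or, not_and, not_le] at hp
  rcases Nat.eq_zero_or_pos d with rfl | hd
  · simp [fN]
  rcases Nat.eq_zero_or_pos e with rfl | he
  · simp [fN]
  have hL : 0 < Nat.lcm d e := Nat.pos_of_ne_zero (Nat.lcm_ne_zero hd.ne' he.ne')
  have hbig : N < Nat.lcm d e := by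
    rcases hp with h | h
    · have hNd : N < d := by omega
      calc N < d := hNd
        _ ≤ Nat.lcm d e := Nat.le_of_dvd hL (Nat.dvd_lcm_left _ _)
    · have hNe : N < e := by omega
      calc N < e := hNe
        _ ≤ Nat.lcm d e := Nat.le_of_dvd hL (Nat.dvd_lcm_right _ _)
  unfold fN
  rw [Nat.div_eq_of_lt hbig]
  simp

lemma tsum_fN {N : ℕ} (hN : 1 ≤ N) :
    ∑' p : ℕ × ℕ, fN N p
      = (1 / (N : ℝ)) * ∑ n ∈ Finset.Icc 1 N,
          ((ArithmeticFunction.sigma 1 n : ℝ) / (n : ℝ)) ^ 2 := by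
  rw [tsum_eq_sum (s := Finset.Icc 1 N ×ˢ Finset.Icc 1 N) (fun p hp => fN_eq_zero hp),
    Finset.sum_product, finite_identity, Finset.mul_sum]
  refine Finset.sum_congr rfl fun d hd => ?_
  rw [Finset.mul_sum]
  refine Finset.sum_congr rfl fun e he => ?_
  unfold fN
  simp only [div_eq_mul_inv, mul_inv]
  ring

noncomputable def ι : ℕ+ × ℕ+ → ℕ × ℕ := fun q => ((q.1 : ℕ), (q.2 : ℕ))

lemma ι_inj : Function.Injective ι := by
  intro a b h
  simp only [ι, Prod.mk.injEq] at h
  exact Prod.ext (PNat.coe_injective h.1) (PNat.coe_injective h.2)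

lemma ι_supp : Function.support gB ⊆ Set.range ι := by
  intro x hne
  rw [Function.mem_support] at hne
  rcases Nat.eq_zero_or_pos x.1 with h | h1
  · exfalso; apply hne; simp [gB, h]
  rcases Nat.eq_zero_or_pos x.2 with h | h2
  · exfalso; apply hne; simp [gB, h]
  exact ⟨(⟨x.1, h1⟩, ⟨x.2, h2⟩), rfl⟩

lemma gB_comp (q : ℕ+ × ℕ+) :
    gB (ι q) = ((1 : ℝ≥0∞)
      / (((q.1 : ℕ) * (q.2 : ℕ) * Nat.lcm q.1 q.2 : ℕ) : ℝ≥0∞)).toReal := by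
  simp [gB, ι, ENNReal.toReal_div]

lemma S_term_ne_top (q : ℕ+ × ℕ+) :
    (1 : ℝ≥0∞) / (((q.1 : ℕ) * (q.2 : ℕ) * Nat.lcm q.1 q.2 : ℕ) : ℝ≥0∞) ≠ ⊤ := by
  have hL : 0 < Nat.lcm (q.1 : ℕ) (q.2 : ℕ) :=
    Nat.pos_of_ne_zero (Nat.lcm_ne_zero q.1.pos.ne' q.2.pos.ne')
  have h0 : (((q.1 : ℕ) * (q.2 : ℕ) * Nat.lcm q.1 q.2 : ℕ) : ℝ≥0∞) ≠ 0 := by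
    have : 0 < (q.1 : ℕ) * (q.2 : ℕ) * Nat.lcm q.1 q.2 := by positivity
    exact_mod_cast this.ne'
  simp [ENNReal.div_eq_top, h0, hL.ne']

lemma summable_gB : Summable gB := by
  have h1 : Summable (gB ∘ ι) := by
    have heq : (gB ∘ ι) = fun q : ℕ+ × ℕ+ => ((1 : ℝ≥0∞)
        / (((q.1 : ℕ) * (q.2 : ℕ) * Nat.lcm q.1 q.2 : ℕ) : ℝ≥0∞)).toReal :=
      funext gB_comp
    rw [heq]
    exact ENNReal.summable_toReal S_ne_top
  exact (Function.Injective.summable_iff ι_inj (fun x hx =>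
    Function.notMem_support.mp (fun hs => hx (ι_supp hs)))).mp h1

lemma tsum_gB : ∑' p : ℕ × ℕ, gB p = zetaR 2 ^ 2 * zetaR 3 / zetaR 4 := by
  rw [← Function.Injective.tsum_eq ι_inj ι_supp, tsum_congr gB_comp,
    ← ENNReal.tsum_toReal_eq S_term_ne_top]
  have : (∑' q : ℕ+ × ℕ+, (1 : ℝ≥0∞)
      / (((q.1 : ℕ) * (q.2 : ℕ) * Nat.lcm q.1 q.2 : ℕ) : ℝ≥0∞)) = S := rfl
  rw [this, S_val, ENNReal.toReal_div, ENNReal.toReal_mul, ENNReal.toReal_pow,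
    Z_toReal (by norm_num), Z_toReal (by norm_num), Z_toReal (by norm_num)]

end Stmt16

open Stmt16 in
/-- the Cesàro mean of (σ₁(n)/n)² converges to ζ(2)²ζ(3)/ζ(4). -/
theorem stmt_16 :
    Tendsto (fun N : ℕ => (1 / (N : ℝ)) * ∑ n ∈ Finset.Icc 1 N,
        ((ArithmeticFunction.sigma 1 n : ℝ) / (n : ℝ)) ^ 2)
      atTop (nhds (zetaR 2 ^ 2 * zetaR 3 / zetaR 4)) := by
  have hmain : Tendsto (fun N : ℕ => ∑' p : ℕ × ℕ, fN N p) atTop (nhds (∑' p : ℕ × ℕ, gB p)) :=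
    tendsto_tsum_of_dominated_convergence summable_gB tendsto_fN
      (Eventually.of_forall bound)
  rw [tsum_gB] at hmain
  refine hmain.congr' ?_
  filter_upwards [eventually_ge_atTop 1] with N hN
  exact tsum_fN hN
end

section
/- For ℓ ≥ 2, the formal power series identity Σ_{n≥1} (B(ℓ,n)/n) z^n = - Σ over (f1,...,f_{ℓ-1}) ∈ ℕ^{ℓ-1} of f1^{ℓ-2} f2^{ℓ-3} ··· f_{ℓ-2} · log(1 - z^{f1···f_{ℓ-1}}) holds for real z with |z| < 1 (both sides converging absolutely). -/
open Finset

lemma sum_le_prod_add_card {ι : Type*} (s : Finset ι) {a : ι → ℕ} (ha : ∀ i ∈ s, 1 ≤ a i) :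
    ∑ i ∈ s, a i ≤ ∏ i ∈ s, a i + #s := by
  classical
  induction s using Finset.induction_on with
  | empty => simp
  | insert j s hj ih =>
    rw [sum_insert hj, prod_insert hj, card_insert_of_notMem hj]
    have hs := ih fun i hi => ha i (mem_insert_of_mem hi)
    have hP : 1 ≤ ∏ i ∈ s, a i := one_le_prod' fun i hi => ha i (mem_insert_of_mem hi)
    have hj1 := ha j (mem_insert_self j s)
    nlinarith

lemma summable_fin_prod_of_nonneg {ι : Type*} : ∀ {n : ℕ} {g : Fin n → ι → ℝ},
    (∀ i, 0 ≤ g i) → (∀ i, Summable (g i)) → Summable fun f : Fin n → ι => ∏ i, g i (f i)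
  | 0, _, _, _ => .of_finite
  | n + 1, g, hg, hs => by
    have hprod := (hs 0).mul_of_nonneg (summable_fin_prod_of_nonneg (g := fun i => g i.succ)
      (fun i => hg i.succ) fun i => hs i.succ) (hg 0)
      fun f => prod_nonneg fun i _ => hg i.succ (f i)
    rw [← (Fin.consEquiv fun _ => ι).summable_iff]
    simpa [Function.comp_def, Fin.prod_univ_succ] using hprod

lemma summable_prod_pow_mul_pow_prod {n : ℕ} (e : Fin n → ℕ) {r : ℝ} (hr0 : 0 ≤ r) (hr1 : r < 1) :
    Summable fun f : Fin n → ℕ+ => (∏ i, ((f i : ℕ) : ℝ) ^ e i) * r ^ ∏ i, (f i : ℕ) := by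
  obtain rfl | hr0 := hr0.eq_or_lt
  · have h0 (f : Fin n → ℕ+) : ∏ i, (f i : ℕ) ≠ 0 := (prod_pos fun i _ => (f i).pos).ne'
    simp only [zero_pow (h0 _), mul_zero]
    exact summable_zero
  have hgeom (d : ℕ) : Summable fun k : ℕ+ => ((k : ℕ) : ℝ) ^ d * r ^ (k : ℕ) :=
    have : Summable fun k : ℕ => (k : ℝ) ^ d * r ^ k :=
      summable_pow_mul_geometric_of_norm_lt_one d (by rwa [Real.norm_of_nonneg hr0.le])
    this.comp_injective PNat.coe_injective
  have hpi := (summable_fin_prod_of_nonneg (fun i k => by positivity) fun i => hgeom (e i)).mul_left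
    (r ^ n)⁻¹
  refine hpi.of_nonneg_of_le (fun f => by positivity) fun f => ?_
  -- `r ^ ∏ fᵢ ≤ r ^ (∑ fᵢ - n)`, which splits as a product over the coordinates
  have hexp : ∑ i, (f i : ℕ) ≤ ∏ i, (f i : ℕ) + n := by
    simpa using sum_le_prod_add_card univ fun i _ => (f i).pos
  have hpow : r ^ n * r ^ ∏ i, (f i : ℕ) ≤ r ^ ∑ i, (f i : ℕ) := by
    rw [← pow_add, add_comm]
    exact pow_le_pow_of_le_one hr0.le hr1.le hexp
  rw [prod_mul_distrib, prod_pow_eq_pow_sum, ← mul_assoc, mul_comm _ (∏ i, _), mul_assoc]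
  gcongr
  rwa [le_inv_mul_iff₀ (by positivity)]

noncomputable def tupleWeight (ℓ : ℕ) (f : Fin ℓ → ℕ+) : ℝ :=
  ∏ i, ((f i : ℕ) : ℝ) ^ (ℓ - 1 - (i : ℕ))

noncomputable def tupleTerm (ℓ : ℕ) (z : ℝ) (f : Fin ℓ → ℕ+) : ℝ :=
  tupleWeight ℓ f / ((∏ i, f i : ℕ+) : ℕ) * z ^ ((∏ i, f i : ℕ+) : ℕ)

lemma summable_tupleTerm (ℓ : ℕ) {z : ℝ} (hz : |z| < 1) : Summable (tupleTerm ℓ z) := by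
  refine .of_norm_bounded (summable_prod_pow_mul_pow_prod (fun i => ℓ - 1 - (i : ℕ))
    (abs_nonneg z) hz) fun f => ?_
  have hW : 0 ≤ tupleWeight ℓ f := by unfold tupleWeight; positivity
  rw [tupleTerm, Real.norm_eq_abs, abs_mul, abs_div, abs_pow, abs_of_nonneg hW, Nat.abs_cast,
    Finset.PNat.coe_prod]
  gcongr
  exact div_le_self hW (by exact_mod_cast one_le_prod' fun i _ => (f i).pos)

lemma tsum_tupleWeight_prod_eq_Btuple (ℓ : ℕ) (n : ℕ+) :
    ∑' f : ((fun f : Fin ℓ → ℕ+ => ∏ i, f i) ⁻¹' {n} : Set _), tupleWeight ℓ f = Btuple ℓ n := by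
  set S := (Fintype.piFinset fun _ : Fin ℓ => range ((n : ℕ) + 1)).filter
    fun f => ∏ i, f i = (n : ℕ)
  have hinj : Function.Injective fun (f : Fin ℓ → ℕ+) i => (f i : ℕ) :=
    fun f g hfg => funext fun i => PNat.coe_injective (congrFun hfg i)
  have hfiber : (fun f : Fin ℓ → ℕ+ => ∏ i, f i) ⁻¹' {n} = S.preimage _ hinj.injOn := by
    ext f
    have hle (i : Fin ℓ) : (f i : ℕ) ≤ ∏ j, (f j : ℕ) :=
      Nat.le_of_dvd (prod_pos fun j _ => (f j).pos) (dvd_prod_of_mem _ (mem_univ i))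
    simp only [Set.mem_preimage, mem_coe, Finset.mem_preimage, S, mem_filter,
      Fintype.mem_piFinset, mem_range, Set.mem_singleton_iff, ← PNat.coe_inj, Finset.PNat.coe_prod]
    exact ⟨fun h => ⟨fun i => Nat.lt_succ_of_le (h ▸ hle i), h⟩, And.right⟩
  have hrange : ∀ g ∈ S, g ∉ Set.range (fun f : Fin ℓ → ℕ+ => fun i => (f i : ℕ)) →
      ∏ i, g i ^ (ℓ - 1 - (i : ℕ)) = 0 := by
    intro g hg hg'
    refine absurd ⟨fun i => ⟨g i, Nat.pos_of_ne_zero fun h0 => n.ne_zero ?_⟩, rfl⟩ hg'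
    rw [← (mem_filter.1 hg).2, prod_eq_zero (mem_univ i) h0]
  rw [hfiber, tsum_subtype', Btuple, ← sum_preimage _ S hinj.injOn _ hrange]
  push_cast
  rfl

lemma HasSum.Btuple_series {ℓ : ℕ} {z a : ℝ} (h : HasSum (tupleTerm ℓ z) a) :
    HasSum (fun n : ℕ+ => (Btuple ℓ n : ℝ) / (n : ℝ) * z ^ (n : ℕ)) a := by
  have hfiber (n : ℕ+) :
      ∑' f : ((fun f : Fin ℓ → ℕ+ => ∏ i, f i) ⁻¹' {n} : Set _), tupleTerm ℓ z f =
        (Btuple ℓ n : ℝ) / (n : ℝ) * z ^ (n : ℕ) := by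
    rw [← tsum_tupleWeight_prod_eq_Btuple, ← tsum_div_const, ← tsum_mul_right]
    refine tsum_congr fun f => ?_
    have hf : ∏ i, (f : Fin ℓ → ℕ+) i = n := f.2
    rw [tupleTerm, hf]
  simpa only [hfiber] using h.tsum_fiberwise fun f => ∏ i, f i

lemma hasSum_pnat_pow_div_eq_neg_log {x : ℝ} (hx : |x| < 1) :
    HasSum (fun k : ℕ+ => x ^ (k : ℕ) / (k : ℕ)) (-Real.log (1 - x)) := by
  refine hasSum_pnat_iff_hasSum_succ (f := fun k : ℕ => x ^ k / k) |>.2 ?_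
  simpa using Real.hasSum_pow_div_log_of_abs_lt_one hx

lemma tupleWeight_snoc {m : ℕ} (g : Fin m → ℕ+) (k : ℕ+) :
    tupleWeight (m + 1) (Fin.snoc g k) = tupleWeight m g * ∏ i, ((g i : ℕ) : ℝ) := by
  simp only [tupleWeight, Fin.prod_univ_castSucc, Fin.snoc_castSucc, Fin.snoc_last, Fin.val_last,
    Fin.val_castSucc, add_tsub_cancel_right, tsub_self, pow_zero, mul_one, ← prod_mul_distrib]
  refine prod_congr rfl fun i _ => ?_
  rw [← pow_succ]
  congr 1
  omega

lemma tupleTerm_snoc {m : ℕ} (z : ℝ) (g : Fin m → ℕ+) (k : ℕ+) :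
    tupleTerm (m + 1) z (Fin.snoc g k) =
      tupleWeight m g * ((z ^ ((∏ i, g i : ℕ+) : ℕ)) ^ (k : ℕ) / (k : ℕ)) := by
  have hprod : ∏ i, (Fin.snoc g k : Fin (m + 1) → ℕ+) i = (∏ i, g i) * k := by
    simp [Fin.prod_univ_castSucc]
  have hP : ((∏ i, g i : ℕ+) : ℝ) ≠ 0 := by positivity
  have hk : ((k : ℕ) : ℝ) ≠ 0 := by positivity
  rw [tupleTerm, tupleWeight_snoc, hprod, PNat.mul_coe, ← pow_mul, Finset.PNat.coe_prod]
  push_cast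
  field_simp

lemma HasSum.neg_log_series {m : ℕ} {z a : ℝ} (hz : |z| < 1)
    (h : HasSum (tupleTerm (m + 1) z) a) :
    HasSum (fun g : Fin m → ℕ+ =>
      tupleWeight m g * -Real.log (1 - z ^ ((∏ i, g i : ℕ+) : ℕ))) a := by
  have hsplit := ((Equiv.prodComm _ _).trans (Fin.snocEquiv fun _ => ℕ+)).hasSum_iff.2 h
  refine hsplit.prod_fiberwise fun g => ?_
  show HasSum (fun k : ℕ+ => tupleTerm (m + 1) z (Fin.snoc g k)) _
  simp only [tupleTerm_snoc]
  refine (hasSum_pnat_pow_div_eq_neg_log ?_).mul_left _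
  rw [abs_pow]
  exact pow_lt_one₀ (abs_nonneg z) hz (PNat.ne_zero _)

/-- Σ_{n≥1} (B(ℓ,n)/n) z^n
  = - Σ_{(f1,...,f_{ℓ-1}) ∈ ℕ^{ℓ-1}} f1^{ℓ-2}···f_{ℓ-2} · log(1 - z^{f1···f_{ℓ-1}}),
for real |z| < 1. -/
theorem stmt_18 (ℓ : ℕ) (hℓ : 2 ≤ ℓ) (z : ℝ) (hz : |z| < 1) :
    ∑' n : ℕ+, (Btuple ℓ n : ℝ) / (n : ℝ) * z ^ (n : ℕ) =
      - ∑' f : Fin (ℓ - 1) → ℕ+,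
          (∏ i : Fin (ℓ - 1), ((f i : ℕ) : ℝ) ^ (ℓ - 2 - (i : ℕ))) *
            Real.log (1 - z ^ (∏ i : Fin (ℓ - 1), (f i : ℕ))) := by
  obtain ⟨m, rfl⟩ : ∃ m, ℓ = m + 1 := ⟨ℓ - 1, by omega⟩
  have h := (summable_tupleTerm (m + 1) hz).hasSum
  rw [h.Btuple_series.tsum_eq, ← (h.neg_log_series hz).tsum_eq, ← tsum_neg]
  refine tsum_congr fun g => ?_
  simp only [tupleWeight, Finset.PNat.coe_prod, mul_neg]
  rfl
end

section
/- For 0 < r < 1 and k, n ≥ 1, A(ℓ,n,k)/n! equals the n-th Taylor coefficient at 0 of the function z ↦ (1/k!)(Σ_{ν≥1} (B(ℓ,ν)/ν) z^ν)^k; i.e., A(ℓ,n,k)/n! = [z^n] (1/k!) L(z)^k where L(z) = Σ_{ν≥1} (B(ℓ,ν)/ν) z^ν. -/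
/-- A(ℓ,n,k): the number of ℓ-tuples of pairwise commuting permutations of
{1,...,n} whose generated subgroup has exactly k orbits. -/
noncomputable def A (ℓ n k : ℕ) : ℕ :=
  Nat.card {π : Fin ℓ → Equiv.Perm (Fin n) //
    (∀ i j : Fin ℓ, π i * π j = π j * π i) ∧
    Nat.card (MulAction.orbitRel.Quotient
      (Subgroup.closure (Set.range π)) (Fin n)) = k}

/-- L(z) = Σ_{ν ≥ 1} (B(ℓ,ν)/ν) z^ν = Σ_{ν ≥ 1} (A(ℓ,ν,1)/ν!) z^ν,
as a formal power series over ℚ. -/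
noncomputable def L (ℓ : ℕ) : PowerSeries ℚ :=
  PowerSeries.mk fun ν => if ν = 0 then 0 else (A ℓ ν 1 : ℚ) / (ν.factorial : ℚ)

/-!
Labelling the `k` orbits of a commuting tuple by `Fin k` (in `k!` ways) amounts to choosing a map
`f : Fin n → Fin k` together with a commuting tuple on each fibre of `f` that is transitive there:
restricting a fibre-preserving tuple to the fibres and gluing tuples on the fibres are inverse to
each other, and the orbits of a restricted tuple are the traces of the orbits of the whole tuple,
since both are images of one subgroup under a homomorphism. Hence
`k! A(ℓ,n,k) = ∑_f ∏_i A(ℓ,|f⁻¹ i|,1)`. Grouping the maps `f` by their vector of fibre sizes `l`,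
each of which is attained by `multinomial l` maps, turns the right side into
`n! ∑_l ∏_i A(ℓ,l_i,1)/l_i! = n! [z^n] L(z)^k`.
-/

open Equiv MulAction Subgroup Function Finset

variable {ι α β κ : Type*}

def CommTuples (ι α : Type*) (k : ℕ) : Type _ :=
  {π : ι → Perm α // (∀ i j, Commute (π i) (π j)) ∧
    Nat.card (orbitRel.Quotient (closure (Set.range π)) α) = k}

instance [Finite ι] [Finite α] {k : ℕ} : Finite (CommTuples ι α k) :=
  Subtype.finite

theorem A_eq_card_commTuples (ℓ n k : ℕ) :
    A ℓ n k = Nat.card (CommTuples (Fin ℓ) (Fin n) k) := rfl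

theorem orbitRel_closure_iff {s : Set (Perm α)} {x y : α} :
    orbitRel (closure s) α x y ↔ ∃ g ∈ closure s, g y = x := by
  simp [orbitRel_apply, mem_orbit_iff, Subgroup.smul_def, Perm.smul_def]

theorem closure_range_map {G H : Type*} [Group G] [Group H] (φ : G →* H) (π : ι → G) :
    closure (Set.range fun j => φ (π j)) = (closure (Set.range π)).map φ := by
  rw [MonoidHom.map_closure, ← Set.range_comp]
  rfl

theorem orbitRel_permCongr (e : α ≃ β) (π : ι → Perm α) (x y : α) :
    orbitRel (closure (Set.range fun j => e.permCongrHom (π j))) β (e x) (e y) ↔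
      orbitRel (closure (Set.range π)) α x y := by
  have hconj : closure (Set.range fun j => e.permCongrHom (π j)) =
      (closure (Set.range π)).map e.permCongrHom.toMonoidHom :=
    closure_range_map e.permCongrHom.toMonoidHom π
  rw [orbitRel_closure_iff, orbitRel_closure_iff, hconj]
  simp [Equiv.permCongr_apply]

theorem card_commTuples_congr (e : α ≃ β) (k : ℕ) :
    Nat.card (CommTuples ι α k) = Nat.card (CommTuples ι β k) := by
  refine Nat.card_congr (subtypeEquiv (piCongrRight fun _ => e.permCongrHom.toEquiv) fun π => ?_)
  refine and_congr (forall₂_congr fun i j => (commute_map_iff e.permCongrHom.injective).symm) ?_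
  rw [Nat.card_congr (Quotient.congr e fun x y => (orbitRel_permCongr e π x y).symm)]
  rfl

def fiberwise (f : α → κ) : Subgroup (Perm α) where
  carrier := {g | ∀ x, f (g x) = f x}
  mul_mem' ha hb x := (ha _).trans (hb x)
  one_mem' _ := rfl
  inv_mem' {g} hg x := by simpa using (hg (g⁻¹ x)).symm

def fiberwiseEquiv (f : α → κ) : fiberwise f ≃* ∀ i, Perm {x // f x = i} where
  toFun g i := (g : Perm α).subtypePerm fun x => by rw [g.2 x]
  invFun τ := ⟨(sigmaFiberEquiv f).permCongr (Perm.sigmaCongrRight τ),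
    fun x => (τ (f x) ⟨x, rfl⟩).2⟩
  left_inv g := by ext x; rfl
  right_inv τ := by funext i; ext ⟨x, rfl⟩; rfl
  map_mul' _ _ := rfl

@[simp]
theorem coe_fiberwiseEquiv_apply (f : α → κ) (g : fiberwise f) {i : κ} (x : {x // f x = i}) :
    (fiberwiseEquiv f g i x : α) = (g : Perm α) x := rfl

theorem orbitRel_fiberwiseEquiv (f : α → κ) (π : ι → fiberwise f) {i : κ}
    (x y : {x // f x = i}) :
    orbitRel (closure (Set.range fun j => fiberwiseEquiv f (π j) i)) _ x y ↔
      orbitRel (closure (Set.range fun j => (π j : Perm α))) α x y := by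
  let restrict := (Pi.evalMonoidHom (fun i => Perm {x // f x = i}) i).comp
    (fiberwiseEquiv f).toMonoidHom
  have hrestrict : closure (Set.range fun j => fiberwiseEquiv f (π j) i) =
      (closure (Set.range π)).map restrict :=
    closure_range_map restrict π
  have hincl : closure (Set.range fun j => (π j : Perm α)) =
      (closure (Set.range π)).map (fiberwise f).subtype :=
    closure_range_map (fiberwise f).subtype π
  rw [orbitRel_closure_iff, orbitRel_closure_iff, hrestrict, hincl]
  simp [restrict, Subtype.ext_iff]

theorem orbitRel_le_ker (f : α → κ) (π : ι → fiberwise f) :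
    orbitRel (closure (Set.range fun j => (π j : Perm α))) α ≤ Setoid.ker f := by
  intro x y h
  obtain ⟨g, hg, rfl⟩ := orbitRel_closure_iff.1 h
  exact closure_le _ |>.2 (Set.range_subset_iff.2 fun j => (π j).2) hg y

theorem mem_fiberwise_of_ker_eq {f : α → κ} {π : ι → Perm α}
    (h : Setoid.ker f = orbitRel (closure (Set.range π)) α) (j : ι) : π j ∈ fiberwise f :=
  fun _ => Setoid.ker_def.1 <| h ▸ orbitRel_closure_iff.2 ⟨π j, subset_closure ⟨j, rfl⟩, rfl⟩

theorem ker_le_orbitRel_iff (f : α → κ) (π : ι → fiberwise f) :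
    Setoid.ker f ≤ orbitRel (closure (Set.range fun j => (π j : Perm α))) α ↔
      ∀ i, ∀ x y : {x // f x = i},
        orbitRel (closure (Set.range fun j => fiberwiseEquiv f (π j) i)) _ x y := by
  simp only [orbitRel_fiberwiseEquiv]
  refine ⟨fun h i x y => h (x.2.trans y.2.symm), fun h x y hxy => ?_⟩
  exact h (f y) ⟨x, hxy⟩ ⟨y, rfl⟩

/- A fibre has exactly one orbit iff it is nonempty (surjectivity of `f`) and all of its points
are related. -/
theorem ker_eq_orbitRel_and_surjective_iff (f : α → κ) (π : ι → fiberwise f) :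
    Setoid.ker f = orbitRel (closure (Set.range fun j => (π j : Perm α))) α ∧ Surjective f ↔
      ∀ i, Nat.card (orbitRel.Quotient
        (closure (Set.range fun j => fiberwiseEquiv f (π j) i)) {x // f x = i}) = 1 := by
  simp only [Nat.card_eq_one_iff_unique, forall_and, Quotient.subsingleton_iff,
    Setoid.eq_top_iff, nonempty_quotient_iff, nonempty_subtype]
  refine and_congr ?_ Iff.rfl
  rw [← ker_le_orbitRel_iff]
  exact ⟨fun h => h.le, fun h => le_antisymm h (orbitRel_le_ker f π)⟩

def fiberTuplesEquiv (f : α → κ) :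
    {π : ι → Perm α // (∀ i j, Commute (π i) (π j)) ∧
      Setoid.ker f = orbitRel (closure (Set.range π)) α ∧ Surjective f} ≃
      ∀ i, CommTuples ι {x // f x = i} 1 where
  toFun π i :=
    let π' j : fiberwise f := ⟨π.1 j, mem_fiberwise_of_ker_eq π.2.2.1 j⟩
    ⟨fun j => fiberwiseEquiv f (π' j) i,
      fun a b => Pi.commute_iff.1
        (((commute_map_iff (fiberwise f).subtype_injective).1 (π.2.1 a b)).map
          (fiberwiseEquiv f)) i,
      (ker_eq_orbitRel_and_surjective_iff f π').1 π.2.2 i⟩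
  invFun τ :=
    let π' j : fiberwise f := (fiberwiseEquiv f).symm fun i => (τ i).1 j
    ⟨fun j => π' j,
      fun a b => ((Pi.commute_iff.2 fun i => (τ i).2.1 a b).map (fiberwiseEquiv f).symm).map
        (fiberwise f).subtype,
      (ker_eq_orbitRel_and_surjective_iff f π').2 fun i => by
        have hτ : (fun j => fiberwiseEquiv f (π' j) i) = (τ i).1 := by ext; simp [π']
        exact hτ ▸ (τ i).2.2⟩
  left_inv π := by
    ext j : 2
    simp
  right_inv τ := by
    ext i j : 3
    simp

noncomputable def labellingEquiv (s : Setoid α) :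
    {f : α → κ // Setoid.ker f = s ∧ Surjective f} ≃ (Quotient s ≃ κ) where
  toFun f := Equiv.ofBijective (Quotient.lift f.1 fun _ _ h => (Setoid.ext_iff.1 f.2.1 _ _).2 h)
    ⟨fun a b => Quotient.inductionOn₂ a b fun _ _ h =>
        Quotient.sound ((Setoid.ext_iff.1 f.2.1 _ _).1 h),
      fun i => (f.2.2 i).elim fun x hx => ⟨Quotient.mk s x, hx⟩⟩
  invFun e := ⟨e ∘ Quotient.mk s, Setoid.ext fun _ _ => by simp [Setoid.ker_def, Quotient.eq],
    e.surjective.comp Quotient.mk_surjective⟩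
  left_inv _ := rfl
  right_inv e := Equiv.ext fun q => Quotient.inductionOn q fun _ => rfl

noncomputable def sigmaCommTuplesEquiv :
    (Σ π : CommTuples ι α (Nat.card κ),
      {f : α → κ // Setoid.ker f = orbitRel (closure (Set.range π.1)) α ∧ Surjective f}) ≃
      Σ f : α → κ, {π : ι → Perm α // (∀ i j, Commute (π i) (π j)) ∧
        Setoid.ker f = orbitRel (closure (Set.range π)) α ∧ Surjective f} where
  toFun p := ⟨p.2.1, p.1.1, p.1.2.1, p.2.2⟩
  invFun q := ⟨⟨q.2.1, q.2.2.1, Nat.card_congr (labellingEquiv _ ⟨q.1, q.2.2.2⟩)⟩, q.1, q.2.2.2⟩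
  left_inv _ := rfl
  right_inv _ := rfl

theorem Nat.card_equiv [Finite β] [Finite κ] :
    Nat.card (β ≃ κ) = if Nat.card β = Nat.card κ then (Nat.card κ).factorial else 0 := by
  split_ifs with h
  · obtain ⟨e⟩ := Finite.card_eq.1 h
    rw [Nat.card_congr (e.equivCongr (Equiv.refl κ)), Nat.card_perm]
  · have : IsEmpty (β ≃ κ) := ⟨fun e => h (Nat.card_congr e)⟩
    exact Nat.card_of_isEmpty

theorem card_commTuples_mul_factorial [Finite ι] [Finite α] [Finite κ] :
    Nat.card (CommTuples ι α (Nat.card κ)) * (Nat.card κ).factorial =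
      Nat.card (Σ f : α → κ, ∀ i, CommTuples ι {x // f x = i} 1) := by
  have := Fintype.ofFinite (CommTuples ι α (Nat.card κ))
  rw [← Nat.card_congr ((sigmaCongrRight fun π => (labellingEquiv _).symm).trans
    (sigmaCommTuplesEquiv.trans (sigmaCongrRight fun f => fiberTuplesEquiv f))), Nat.card_sigma]
  rw [sum_congr rfl fun π _ => (Nat.card_equiv.trans (if_pos π.2.2)), sum_const,
    card_univ, smul_eq_mul, Nat.card_eq_fintype_card]

def sigmaFiberEquivsEquiv (F : κ → Type*) :
    (Σ f : α → κ, ∀ i, {x // f x = i} ≃ F i) ≃ (α ≃ Σ i, F i) where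
  toFun p := (sigmaFiberEquiv p.1).symm.trans (sigmaCongrRight p.2)
  invFun E := ⟨fun x => (E x).1, fun i => (E.subtypeEquiv fun _ => Iff.rfl).trans (sigmaSubtype i)⟩
  left_inv := by
    rintro ⟨f, e⟩
    refine Sigma.ext rfl (heq_of_eq ?_)
    funext i
    ext ⟨x, rfl⟩
    rfl
  right_inv _ := rfl

theorem card_fun_fiber_card_eq_multinomial [Finite α] [Fintype κ] (l : κ → ℕ)
    (hl : ∑ i, l i = Nat.card α) :
    Nat.card {f : α → κ // ∀ i, Nat.card {x // f x = i} = l i} = Nat.multinomial univ l := by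
  classical
  have := Fintype.ofFinite α
  have hequivs : Nat.card (Σ f : α → κ, ∀ i, {x // f x = i} ≃ Fin (l i)) =
      Nat.card {f : α → κ // ∀ i, Nat.card {x // f x = i} = l i} * ∏ i, (l i).factorial := by
    simp only [Nat.card_sigma, Nat.card_pi, Nat.card_equiv, Nat.card_eq_fintype_card (α := Fin _),
      Fintype.card_fin, prod_ite_zero, mem_univ, true_implies]
    rw [← sum_filter, sum_const, smul_eq_mul, Nat.card_eq_fintype_card,
      Fintype.card_subtype]
  have hbij : Nat.card (α ≃ Σ i, Fin (l i)) = (Nat.card α).factorial := by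
    rw [Nat.card_equiv, Nat.card_sigma]
    simp [hl]
  refine Nat.eq_of_mul_eq_mul_right (prod_pos (s := univ) fun i _ => (l i).factorial_pos) ?_
  rw [← hequivs, Nat.card_congr (sigmaFiberEquivsEquiv _), hbij, ← hl, ← Nat.multinomial_spec,
    mul_comm]

theorem sum_card_fiber [Finite α] [Fintype κ] (f : α → κ) :
    ∑ i, Nat.card {x // f x = i} = Nat.card α := by
  rw [← Nat.card_congr (sigmaFiberEquiv f), Nat.card_sigma]

theorem sum_prod_card_fiber [Fintype α] [DecidableEq α] [Fintype κ] [DecidableEq κ]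
    {R : Type*} [CommSemiring R] (a : ℕ → R) :
    ∑ f : α → κ, ∏ i, a (Nat.card {x // f x = i}) =
      ∑ l ∈ finsuppAntidiag (univ : Finset κ) (Nat.card α),
        (Nat.multinomial univ ⇑l : R) * ∏ i, a (l i) := by
  let sizes (f : α → κ) : κ →₀ ℕ := Finsupp.equivFunOnFinite.symm fun i => Nat.card {x // f x = i}
  have hsizes (f : α → κ) (l : κ →₀ ℕ) : sizes f = l ↔ ∀ i, Nat.card {x // f x = i} = l i := by
    simp [sizes, Finsupp.ext_iff]
  have hmaps (f : α → κ) : sizes f ∈ finsuppAntidiag univ (Nat.card α) := by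
    simpa [sizes, mem_finsuppAntidiag] using sum_card_fiber f
  rw [← sum_fiberwise_of_maps_to fun f _ => hmaps f]
  refine sum_congr rfl fun l hl => ?_
  have hprod : ∀ f ∈ univ.filter (sizes · = l),
      ∏ i, a (Nat.card {x // f x = i}) = ∏ i, a (l i) := fun f hf =>
    prod_congr rfl fun i _ => by rw [(hsizes f l).1 (mem_filter.1 hf).2 i]
  rw [sum_congr rfl hprod, sum_const, nsmul_eq_mul,
    ← card_fun_fiber_card_eq_multinomial l (mem_finsuppAntidiag.1 hl).1, Nat.card_eq_fintype_card,
    Fintype.card_subtype]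
  simp only [hsizes]

theorem sum_prod_card_fiber_eq_factorial_mul_coeff {K : Type*} [Field K] [CharZero K]
    (a : ℕ → K) (n k : ℕ) :
    ∑ f : Fin n → Fin k, ∏ i, a (Nat.card {x // f x = i}) =
      n.factorial * PowerSeries.coeff n ((PowerSeries.mk fun m => a m / m.factorial) ^ k) := by
  rw [sum_prod_card_fiber, Nat.card_fin, ← Fin.prod_const, PowerSeries.coeff_prod, mul_sum]
  refine sum_congr rfl fun l hl => ?_
  have hspec := congrArg (Nat.cast (R := K)) (Nat.multinomial_spec univ l)
  rw [(mem_finsuppAntidiag.1 hl).1] at hspec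
  push_cast at hspec
  have hfact : (∏ i, ((l i).factorial : K)) ≠ 0 :=
    prod_ne_zero_iff.2 fun i _ => Nat.cast_ne_zero.2 (l i).factorial_ne_zero
  simp only [PowerSeries.coeff_mk, prod_div_distrib]
  rw [← hspec]
  field_simp

theorem A_mul_factorial (ℓ n k : ℕ) :
    A ℓ n k * k.factorial = ∑ f : Fin n → Fin k, ∏ i, A ℓ (Nat.card {x // f x = i}) 1 := by
  have h := card_commTuples_mul_factorial (ι := Fin ℓ) (α := Fin n) (κ := Fin k)
  rw [Nat.card_fin] at h
  rw [A_eq_card_commTuples, h, Nat.card_sigma]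
  refine sum_congr rfl fun f _ => ?_
  rw [Nat.card_pi]
  exact prod_congr rfl fun i _ => card_commTuples_congr (Finite.equivFin _) 1

theorem A_zero_one (ℓ : ℕ) : A ℓ 0 1 = 0 := by
  rw [A_eq_card_commTuples]
  have : IsEmpty (CommTuples (Fin ℓ) (Fin 0) 1) := ⟨fun π => by simpa using π.2.2⟩
  exact Nat.card_of_isEmpty

theorem L_eq_mk (ℓ : ℕ) : L ℓ = PowerSeries.mk fun m => (A ℓ m 1 : ℚ) / m.factorial := by
  ext (_ | m) <;> simp [L, A_zero_one]

theorem stmt_19_general (ℓ n k : ℕ) :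
    (A ℓ n k : ℚ) / (n.factorial : ℚ) =
      PowerSeries.coeff n (((k.factorial : ℚ))⁻¹ • (L ℓ) ^ k) := by
  have hcount : (A ℓ n k : ℚ) * k.factorial = n.factorial * PowerSeries.coeff n (L ℓ ^ k) := by
    rw [L_eq_mk, ← sum_prod_card_fiber_eq_factorial_mul_coeff]
    exact_mod_cast A_mul_factorial ℓ n k
  rw [map_smul, smul_eq_mul]
  field_simp
  linear_combination hcount

/-- A(ℓ,n,k)/n! = [z^n] (1/k!) L(z)^k. -/
theorem stmt_19 (ℓ n k : ℕ) (hℓ : 2 ≤ ℓ) (hn : 1 ≤ n) (hk : 1 ≤ k) :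
    (A ℓ n k : ℚ) / (n.factorial : ℚ) =
      PowerSeries.coeff n (((k.factorial : ℚ))⁻¹ • (L ℓ) ^ k) :=
  stmt_19_general ℓ n k
end
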